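/- arXiv:2512.23190 — 7 statements merged into one kernel-verified Lean document; each statement's English description precedes it below -/
import Mathlib

section
/- Let X ⊆ ℝ^d be a convex set, α > 0, and let f : X → ℝ be α-exp-concave and differentiable on X. Then for any x, u ∈ X, any constants D, G > 0 with ‖x − u‖ ≤ D and ‖∇f(x)‖ ≤ G, and any γ with 0 < γ ≤ γ₀ := (1/2)·min{1/(DG), α}, it holds that f(x) − f(u) ≤ ∇f(x)ᵀ(x − u) − (γ/2)·(∇f(x)ᵀ(x − u))². -/
open Set Filter Topology

lemma concave_grad {E : Type*} [NormedAddCommGroup E] [NormedSpace ℝ E]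
    {s : Set E} {F : E → ℝ} (hF : ConcaveOn ℝ s F) {x u : E} (hx : x ∈ s) (hu : u ∈ s)
    {L : E →L[ℝ] ℝ} (hL : HasFDerivAt F L x) : F u ≤ F x + L (u - x) := by
  set γ : ℝ → E := fun t => x + t • (u - x) with hγ
  have hγd : HasDerivAt γ (u - x) 0 := by
    have := ((hasDerivAt_id (0:ℝ)).smul_const (u - x)).const_add x
    simpa [hγ] using this
  have hγ0 : γ 0 = x := by simp [hγ]
  have hψ : HasDerivAt (F ∘ γ) (L (u - x)) 0 := by
    apply HasFDerivAt.comp_hasDerivAt _ _ hγd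
    rwa [hγ0]
  have htend : Tendsto (slope (F ∘ γ) 0) (𝓝[>] (0:ℝ)) (𝓝 (L (u - x))) :=
    (hasDerivAt_iff_tendsto_slope.1 hψ).mono_left
      (nhdsWithin_mono _ (fun t ht => ne_of_gt ht))
  have hbound : ∀ᶠ t in 𝓝[>] (0:ℝ), F u - F x ≤ slope (F ∘ γ) 0 t := by
    filter_upwards [Ioo_mem_nhdsGT_of_mem (Set.mem_Ico.2 ⟨le_refl 0, zero_lt_one⟩)] with t ht
    obtain ⟨ht0, ht1⟩ := ht
    have hconc := hF.2 hx hu (by linarith : (0:ℝ) ≤ 1 - t) ht0.le (by ring)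
    have hγt : γ t = (1 - t) • x + t • u := by
      simp only [hγ]; module
    have hFt : (1 - t) * F x + t * F u ≤ F (γ t) := by rw [hγt]; simpa using hconc
    rw [slope_def_field]
    rw [Function.comp_apply, Function.comp_apply, hγ0]
    rw [sub_zero, le_div_iff₀ ht0]
    nlinarith [hFt]
  linarith [ge_of_tendsto htend hbound]

open Set Filter Topology

-- log inequality
lemma log_aux {z : ℝ} (h1 : -1 < z) (h2 : z ≤ 1) : Real.log (1 + z) ≤ z - z^2/4 := by
  set φ : ℝ → ℝ := fun t => t - t^2/4 - Real.log (1 + t) with hφ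
  have hderiv : ∀ t : ℝ, -1 < t → HasDerivAt φ (1 - t/2 - 1/(1+t)) t := by
    intro t ht
    have h1t : (1:ℝ) + t ≠ 0 := by linarith
    have hlog : HasDerivAt (fun s : ℝ => Real.log (1 + s)) (1/(1+t)) t := by
      have := ((hasDerivAt_id t).const_add 1).log h1t
      simpa using this
    have hpow : HasDerivAt (fun s : ℝ => s - s^2/4) (1 - t/2) t := by
      have := (hasDerivAt_id t).sub ((hasDerivAt_pow 2 t).div_const 4)
      exact this.congr_deriv (by norm_num <;> ring)
    exact hpow.sub hlog
  have hcont : ContinuousOn φ (Ioi (-1:ℝ)) := by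
    apply ContinuousOn.sub (by fun_prop)
    apply ContinuousOn.log (by fun_prop)
    intro t ht; simp only [mem_Ioi] at ht; intro h; linarith
  have key : 0 ≤ φ z := by
    rcases le_or_gt 0 z with hz | hz
    · have hmono : MonotoneOn φ (Icc (0:ℝ) 1) := by
        apply monotoneOn_of_deriv_nonneg (convex_Icc 0 1)
          (hcont.mono (by intro t ht; simp at ht ⊢; linarith [ht.1]))
        · intro t ht
          rw [interior_Icc] at ht
          exact ((hderiv t (by linarith [ht.1])).differentiableAt).differentiableWithinAt
        · intro t ht
          rw [interior_Icc] at ht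
          rw [(hderiv t (by linarith [ht.1])).deriv]
          have h1t : (0:ℝ) < 1 + t := by linarith [ht.1]
          rw [sub_nonneg, div_le_iff₀ h1t]
          nlinarith [ht.1, ht.2]
      have := hmono (left_mem_Icc.2 zero_le_one) ⟨hz, h2⟩ hz
      simpa [hφ] using this
    · have hanti : AntitoneOn φ (Icc z 0) := by
        apply antitoneOn_of_deriv_nonpos (convex_Icc z 0)
          (hcont.mono (by intro t ht; simp at ht ⊢; linarith [ht.1]))
        · intro t ht
          rw [interior_Icc] at ht
          exact ((hderiv t (by linarith [ht.1])).differentiableAt).differentiableWithinAt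
        · intro t ht
          rw [interior_Icc] at ht
          rw [(hderiv t (by linarith [ht.1])).deriv]
          have h1t : (0:ℝ) < 1 + t := by linarith [ht.1]
          rw [sub_nonpos, le_div_iff₀ h1t]
          nlinarith [ht.2]
      have := hanti (left_mem_Icc.2 hz.le) (right_mem_Icc.2 hz.le) hz.le
      simpa [hφ] using this
  simpa [hφ] using key

open scoped RealInnerProductSpace

/-- Lemma on exp-concavity: if `f` is `α`-exp-concave and differentiable on a
convex set `X`, then for `x, u ∈ X`, `‖x - u‖ ≤ D`, `‖∇f(x)‖ ≤ G` and
`0 < γ ≤ γ₀ = (1/2)·min{1/(DG), α}`, we have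
`f(x) - f(u) ≤ ⟨∇f(x), x - u⟩ - (γ/2)·⟨∇f(x), x - u⟩²`. -/
theorem stmt_0 {d : ℕ} (X : Set (EuclideanSpace ℝ (Fin d))) (hXconv : Convex ℝ X)
    (α : ℝ) (hα : 0 < α)
    (f : EuclideanSpace ℝ (Fin d) → ℝ) (gradf : EuclideanSpace ℝ (Fin d) → EuclideanSpace ℝ (Fin d))
    (hexp : ConcaveOn ℝ X (fun z => Real.exp (-α * f z)))
    (hgrad : ∀ z ∈ X, HasGradientAt f (gradf z) z)
    (x u : EuclideanSpace ℝ (Fin d)) (hx : x ∈ X) (hu : u ∈ X)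
    (D G : ℝ) (hD : 0 < D) (hG : 0 < G)
    (hxu : ‖x - u‖ ≤ D) (hgx : ‖gradf x‖ ≤ G)
    (γ : ℝ) (hγpos : 0 < γ) (hγ : γ ≤ (1/2) * min (1/(D*G)) α) :
    f x - f u ≤ ⟪gradf x, x - u⟫ - (γ/2) * (⟪gradf x, x - u⟫)^2 := by
  set g := gradf x with hg
  set s := ⟪g, x - u⟫ with hs
  -- derivative of the exp-concave function
  have hfd : HasFDerivAt f ((InnerProductSpace.toDual ℝ _) g) x := (hgrad x hx).hasFDerivAt
  have hFd : HasFDerivAt (fun z => Real.exp (-α * f z))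
      (Real.exp (-α * f x) • ((-α) • ((InnerProductSpace.toDual ℝ _) g))) x :=
    (hfd.const_mul (-α)).exp
  have hgi := concave_grad hexp hx hu hFd
  have hLval : (Real.exp (-α * f x) • ((-α) • ((InnerProductSpace.toDual ℝ _) g))) (u - x)
      = Real.exp (-α * f x) * (α * s) := by
    have hinner : ⟪g, u - x⟫ = -s := by
      rw [hs, show u - x = -(x - u) by abel, inner_neg_right]
    simp only [ContinuousLinearMap.smul_apply, smul_eq_mul,
      InnerProductSpace.toDual_apply_apply, hinner]
    ring
  rw [hLval] at hgi
  have hP : (0:ℝ) < Real.exp (-α * f x) := Real.exp_pos _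
  have hE : (0:ℝ) < Real.exp (-α * f u) := Real.exp_pos _
  have hgi' : Real.exp (-α * f u) ≤ Real.exp (-α * f x) * (1 + α * s) := by linarith [hgi]
  have h1αs : 0 < 1 + α * s := by nlinarith
  -- take logs
  have hlog : -α * f u ≤ -α * f x + Real.log (1 + α * s) := by
    have h' := Real.log_le_log hE hgi'
    rwa [Real.log_exp, Real.log_mul (ne_of_gt hP) (ne_of_gt h1αs), Real.log_exp] at h'
  have hstep1 : f x - f u ≤ Real.log (1 + α * s) / α := by
    rw [le_div_iff₀ hα]; nlinarith
  set β := 2 * γ with hβ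
  have hβpos : 0 < β := by positivity
  have hβα : β ≤ α := by
    have := min_le_right (1/(D*G)) α
    simp only [hβ]; linarith
  have hβDG : β * (D * G) ≤ 1 := by
    have h1 : β ≤ 1/(D*G) := by
      have := min_le_left (1/(D*G)) α
      simp only [hβ]; linarith
    calc β * (D*G) ≤ (1/(D*G)) * (D*G) := by
          apply mul_le_mul_of_nonneg_right h1 (by positivity)
      _ = 1 := by field_simp
  have habs : |s| ≤ D * G := by
    calc |s| ≤ ‖g‖ * ‖x - u‖ := abs_real_inner_le_norm g (x - u)
      _ ≤ G * D := mul_le_mul hgx hxu (norm_nonneg _) hG.le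
      _ = D * G := by ring
  have h1βs : 0 < 1 + β * s := by
    rcases le_or_gt 0 s with hs0 | hs0
    · nlinarith
    · nlinarith
  -- log comparison between α and β
  have hstep2 : Real.log (1 + α * s) / α ≤ Real.log (1 + β * s) / β := by
    have hconc := (strictConcaveOn_log_Ioi.concaveOn).2
      (Set.mem_Ioi.2 h1αs) (Set.mem_Ioi.2 one_pos)
      (by positivity : (0:ℝ) ≤ β/α) (by
        rw [sub_nonneg, div_le_one hα]; exact hβα : (0:ℝ) ≤ 1 - β/α) (by ring)
    have heq : (β/α) • (1 + α * s) + (1 - β/α) • (1:ℝ) = 1 + β * s := by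
      simp only [smul_eq_mul]
      field_simp
      ring
    rw [heq] at hconc
    simp only [smul_eq_mul, Real.log_one, mul_zero, add_zero] at hconc
    rw [div_le_div_iff₀ hα hβpos]
    calc Real.log (1 + α * s) * β = α * ((β/α) * Real.log (1 + α*s)) := by
          field_simp
      _ ≤ α * Real.log (1 + β * s) := by
          apply mul_le_mul_of_nonneg_left hconc hα.le
      _ = Real.log (1 + β * s) * α := by ring
  -- final bound via log_aux
  have hβs1 : β * s ≤ 1 := by
    calc β * s ≤ β * |s| := mul_le_mul_of_nonneg_left (le_abs_self s) hβpos.le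
      _ ≤ β * (D * G) := mul_le_mul_of_nonneg_left habs hβpos.le
      _ ≤ 1 := hβDG
  have hstep3 : Real.log (1 + β * s) / β ≤ s - (γ/2) * s^2 := by
    have := log_aux (by linarith : (-1:ℝ) < β * s) hβs1
    rw [div_le_iff₀ hβpos]
    calc Real.log (1 + β * s) ≤ β * s - (β*s)^2/4 := this
      _ = (s - (γ/2) * s^2) * β := by rw [hβ]; ring
  linarith [hstep1, hstep2, hstep3]
end

section
/- Let d ≥ 1, λ > 0, L ≥ 0, and let v_1, …, v_n ∈ ℝ^d satisfy ‖v_i‖ ≤ L for every i ∈ {1,…,n}. Define A_i = λI + Σ_{j=1}^{i} v_j v_jᵀ for i = 0, 1, …, n. Then Σ_{i=1}^{n} v_iᵀ A_i^{-1} v_i ≤ log det(A_n) − log det(A_0) ≤ d·log(1 + L²·n/(d·λ)). -/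
open scoped RealInnerProductSpace
open Matrix

noncomputable def mApp {d : ℕ} (A : Matrix (Fin d) (Fin d) ℝ) (x : EuclideanSpace ℝ (Fin d)) :
    EuclideanSpace ℝ (Fin d) :=
  Matrix.toEuclideanLin A x

noncomputable def quadForm {d : ℕ} (A : Matrix (Fin d) (Fin d) ℝ) (x : EuclideanSpace ℝ (Fin d)) : ℝ :=
  ⟪x, mApp A x⟫

noncomputable def mnorm {d : ℕ} (A : Matrix (Fin d) (Fin d) ℝ) (x : EuclideanSpace ℝ (Fin d)) : ℝ :=
  Real.sqrt (quadForm A x)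

/-- `p` is a Mahalanobis projection of `y` onto `C` with respect to `A`. -/
def IsMProj {d : ℕ} (A : Matrix (Fin d) (Fin d) ℝ) (C : Set (EuclideanSpace ℝ (Fin d)))
    (y p : EuclideanSpace ℝ (Fin d)) : Prop :=
  p ∈ C ∧ ∀ z ∈ C, mnorm A (p - y) ≤ mnorm A (z - y)

/-- The outer product `v vᵀ` of a vector with itself. -/
noncomputable def outerProd {d : ℕ} (v : EuclideanSpace ℝ (Fin d)) : Matrix (Fin d) (Fin d) ℝ :=
  Matrix.of (fun i j => v i * v j)

section aux

lemma inner_mApp {d : ℕ} (B : Matrix (Fin d) (Fin d) ℝ) (x : EuclideanSpace ℝ (Fin d)) :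
    ⟪x, mApp B x⟫ = x ⬝ᵥ (B *ᵥ x) := by
  simp only [mApp, Matrix.toEuclideanLin_apply, PiLp.inner_apply, RCLike.inner_apply,
    dotProduct, conj_trivial]
  exact Finset.sum_congr rfl fun i _ => mul_comm _ _

lemma outerProd_eq {d : ℕ} (v : EuclideanSpace ℝ (Fin d)) :
    outerProd v = Matrix.replicateCol Unit (v : Fin d → ℝ) * Matrix.replicateRow Unit (v : Fin d → ℝ) := by
  ext i j
  simp [outerProd, Matrix.mul_apply, Matrix.replicateCol, Matrix.replicateRow]

lemma outerProd_posSemidef {d : ℕ} (v : EuclideanSpace ℝ (Fin d)) : (outerProd v).PosSemidef := by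
  rw [outerProd_eq]
  have := Matrix.posSemidef_self_mul_conjTranspose (Matrix.replicateCol Unit (v : Fin d → ℝ))
  simpa [Matrix.conjTranspose_replicateCol, star_trivial] using this

lemma smul_one_posDef {d : ℕ} {lam : ℝ} (hlam : 0 < lam) :
    (lam • (1 : Matrix (Fin d) (Fin d) ℝ)).PosDef := by
  have : lam • (1 : Matrix (Fin d) (Fin d) ℝ) = Matrix.diagonal (fun _ => lam) := by
    ext i j
    by_cases h : i = j <;> simp [Matrix.diagonal, Matrix.one_apply, h]
  rw [this]
  exact Matrix.posDef_diagonal_iff.mpr fun _ => hlam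

lemma psd_sum {d : ℕ} {ι : Type*} (s : Finset ι) (f : ι → Matrix (Fin d) (Fin d) ℝ)
    (hf : ∀ i ∈ s, (f i).PosSemidef) : (∑ i ∈ s, f i).PosSemidef := by
  classical
  induction s using Finset.induction_on with
  | empty => simpa using Matrix.PosSemidef.zero
  | insert _ _ h ih =>
    rw [Finset.sum_insert h]
    exact (hf _ (Finset.mem_insert_self _ _)).add
      (ih fun i hi => hf i (Finset.mem_insert_of_mem hi))

lemma det_step {d : ℕ} {B B' : Matrix (Fin d) (Fin d) ℝ} (u : EuclideanSpace ℝ (Fin d))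
    (hB' : IsUnit B'.det) (h : B' = B + outerProd u) :
    B.det = B'.det * (1 - u ⬝ᵥ (B'⁻¹ *ᵥ u)) := by
  have key := Matrix.det_add_replicateCol_mul_replicateRow (ι := Unit) hB' (u : Fin d → ℝ) (-(u : Fin d → ℝ))
  have h1 : B' + replicateCol Unit (u : Fin d → ℝ) * replicateRow Unit (-(u : Fin d → ℝ)) = B := by
    rw [h, outerProd_eq]
    ext i j
    simp [Matrix.mul_apply, Matrix.replicateCol, Matrix.replicateRow]
  have h2 : (1 + replicateRow Unit (-(u : Fin d → ℝ)) * B'⁻¹ * replicateCol Unit (u : Fin d → ℝ)).det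
      = 1 - u ⬝ᵥ (B'⁻¹ *ᵥ u) := by
    rw [Matrix.det_unique, Matrix.add_apply, Matrix.one_apply_eq,
      ← Matrix.replicateRow_vecMul, Matrix.replicateRow_mul_replicateCol_apply, Matrix.neg_vecMul, neg_dotProduct,
      Matrix.dotProduct_mulVec, sub_eq_add_neg]
  rw [← h1, key, h2]

lemma trace_eq_sum_eig {d : ℕ} {M : Matrix (Fin d) (Fin d) ℝ} (hM : M.IsHermitian) :
    M.trace = ∑ i, hM.eigenvalues i := by
  conv_lhs => rw [hM.spectral_theorem]
  rw [Unitary.conjStarAlgAut_apply, Matrix.trace_mul_cycle]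
  rw [Unitary.coe_star_mul_self, Matrix.one_mul, Matrix.trace_diagonal]
  simp

lemma det_le_pow {d : ℕ} (hd : 1 ≤ d) {M : Matrix (Fin d) (Fin d) ℝ} (hM : M.PosDef) :
    M.det ≤ (M.trace / d) ^ d := by
  have hd0 : (d : ℝ) ≠ 0 := Nat.cast_ne_zero.mpr (by omega)
  have heig := hM.eigenvalues_pos
  have hdet : M.det = ∏ i, hM.1.eigenvalues i := by
    rw [hM.1.det_eq_prod_eigenvalues]; norm_cast
  have amgm := Real.geom_mean_le_arith_mean_weighted Finset.univ (fun _ => (d : ℝ)⁻¹)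
    (fun i => hM.1.eigenvalues i) (fun _ _ => by positivity)
    (by simp [Finset.card_univ]; field_simp) (fun i _ => (heig i).le)
  have hsum : ∑ i, (d : ℝ)⁻¹ * hM.1.eigenvalues i = M.trace / d := by
    rw [trace_eq_sum_eig hM.1, ← Finset.mul_sum]; ring
  rw [hsum] at amgm
  have hprod : (∏ i, hM.1.eigenvalues i ^ ((d : ℝ)⁻¹)) ^ (d : ℕ) = M.det := by
    rw [← Finset.prod_pow, hdet]
    apply Finset.prod_congr rfl
    intro i _
    rw [← Real.rpow_natCast (hM.1.eigenvalues i ^ ((d:ℝ)⁻¹)) d, ← Real.rpow_mul (heig i).le]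
    field_simp
    simp
  calc M.det = (∏ i, hM.1.eigenvalues i ^ ((d : ℝ)⁻¹)) ^ (d : ℕ) := hprod.symm
    _ ≤ (M.trace / d) ^ d := by
        apply pow_le_pow_left₀ (Finset.prod_nonneg fun i _ => Real.rpow_nonneg (heig i).le _) amgm

end aux

/-- elliptical potential lemma, log-det version. -/
theorem stmt_1 {d : ℕ} (hd : 1 ≤ d) (n : ℕ) (lam L : ℝ) (hlam : 0 < lam) (hL : 0 ≤ L)
    (v : ℕ → EuclideanSpace ℝ (Fin d)) (hv : ∀ i < n, ‖v i‖ ≤ L)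
    (A : ℕ → Matrix (Fin d) (Fin d) ℝ)
    (hA : ∀ i, A i = lam • (1 : Matrix (Fin d) (Fin d) ℝ) +
      ∑ j ∈ Finset.range i, outerProd (v j)) :
    (∑ i ∈ Finset.range n, ⟪v i, mApp (A (i+1))⁻¹ (v i)⟫)
      ≤ Real.log (A n).det - Real.log (A 0).det ∧
    Real.log (A n).det - Real.log (A 0).det ≤ d * Real.log (1 + L^2 * n / (d * lam)) := by
  have hd0 : (d : ℝ) ≠ 0 := Nat.cast_ne_zero.mpr (by omega)
  have hApos : ∀ i, (A i).PosDef := by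
    intro i
    rw [hA i]
    exact (smul_one_posDef hlam).add_posSemidef
      (psd_sum _ _ fun j _ => outerProd_posSemidef (v j))
  have hdet : ∀ i, 0 < (A i).det := fun i => (hApos i).det_pos
  have hstep : ∀ i, A (i + 1) = A i + outerProd (v i) := by
    intro i
    rw [hA, hA, Finset.sum_range_succ, add_assoc]
  -- First inequality
  have first : (∑ i ∈ Finset.range n, ⟪v i, mApp (A (i+1))⁻¹ (v i)⟫)
      ≤ Real.log (A n).det - Real.log (A 0).det := by
    have hterm : ∀ i, ⟪v i, mApp (A (i+1))⁻¹ (v i)⟫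
        ≤ Real.log (A (i+1)).det - Real.log (A i).det := by
      intro i
      rw [inner_mApp]
      set t := (v i : Fin d → ℝ) ⬝ᵥ ((A (i+1))⁻¹ *ᵥ (v i : Fin d → ℝ)) with ht
      have hds := det_step (v i) (hdet (i+1)).ne'.isUnit (hstep i)
      rw [← ht] at hds
      have hr : (A i).det / (A (i + 1)).det = 1 - t := by
        rw [hds, mul_comm, mul_div_assoc, div_self (hdet (i+1)).ne', mul_one]
      have hrpos : 0 < (A i).det / (A (i+1)).det := div_pos (hdet i) (hdet (i+1))
      have hlog := Real.log_le_sub_one_of_pos hrpos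
      rw [Real.log_div (hdet i).ne' (hdet (i+1)).ne', hr] at hlog
      linarith
    calc (∑ i ∈ Finset.range n, ⟪v i, mApp (A (i+1))⁻¹ (v i)⟫)
        ≤ ∑ i ∈ Finset.range n, (Real.log (A (i+1)).det - Real.log (A i).det) :=
          Finset.sum_le_sum fun i _ => hterm i
      _ = Real.log (A n).det - Real.log (A 0).det :=
          Finset.sum_range_sub (fun i => Real.log (A i).det) n
  refine ⟨first, ?_⟩
  -- Second inequality
  have hdet0 : (A 0).det = lam ^ d := by
    rw [hA 0]
    simp [Matrix.det_smul]
  have htraceO : ∀ j < n, (outerProd (v j)).trace ≤ L ^ 2 := by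
    intro j hj
    have h1 : (outerProd (v j)).trace = ⟪v j, v j⟫ := by
      simp [outerProd, Matrix.trace, Matrix.diag, PiLp.inner_apply, RCLike.inner_apply]
      rw [EuclideanSpace.norm_sq_eq]
      exact Finset.sum_congr rfl fun i _ => by rw [Real.norm_eq_abs, sq_abs, sq]
    rw [h1, real_inner_self_eq_norm_sq]
    exact pow_le_pow_left₀ (norm_nonneg _) (hv j hj) 2
  have htrace : (A n).trace ≤ d * lam + n * L ^ 2 := by
    rw [hA n, Matrix.trace_add, Matrix.trace_smul, Matrix.trace_one, Matrix.trace_sum]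
    have : ∑ j ∈ Finset.range n, (outerProd (v j)).trace ≤ ∑ j ∈ Finset.range n, L ^ 2 :=
      Finset.sum_le_sum fun j hj => htraceO j (Finset.mem_range.mp hj)
    simp only [Finset.sum_const, Finset.card_range, nsmul_eq_mul] at this
    simp only [smul_eq_mul, Fintype.card_fin]
    linarith
  set c : ℝ := 1 + L ^ 2 * n / (d * lam) with hc
  have hc1 : 1 ≤ c := by
    rw [hc]
    have : (0:ℝ) ≤ L ^ 2 * n / (d * lam) := by positivity
    linarith
  have hcpos : 0 < c := lt_of_lt_of_le one_pos hc1
  have hbase : (A n).trace / d ≤ lam * c := by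
    rw [hc]
    rw [div_le_iff₀ (by positivity : (0:ℝ) < (d:ℝ))]
    have : lam * (1 + L ^ 2 * n / (d * lam)) * d = d * lam + n * L ^ 2 := by
      field_simp
    rw [this]
    exact htrace
  have hdetn : (A n).det ≤ (lam * c) ^ d := by
    calc (A n).det ≤ ((A n).trace / d) ^ d := det_le_pow hd (hApos n)
      _ ≤ (lam * c) ^ d := by
          apply pow_le_pow_left₀ ?_ hbase
          have h0 : 0 < (A n).trace := by
            have := trace_eq_sum_eig (hApos n).1
            rw [this]
            apply Finset.sum_pos (fun i _ => (hApos n).eigenvalues_pos i)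
            exact Finset.univ_nonempty_iff.mpr (Fin.pos_iff_nonempty.mp (by omega))
          positivity
  have hlogn : Real.log (A n).det ≤ d * (Real.log lam + Real.log c) := by
    calc Real.log (A n).det ≤ Real.log ((lam * c) ^ d) :=
          Real.log_le_log (hdet n) hdetn
      _ = d * Real.log (lam * c) := by rw [Real.log_pow]
      _ = d * (Real.log lam + Real.log c) := by rw [Real.log_mul hlam.ne' hcpos.ne']
  have hlog0 : Real.log (A 0).det = d * Real.log lam := by
    rw [hdet0, Real.log_pow]
  rw [hlog0]
  linarith [hlogn]
end

section
/- Let X ⊆ ℝ^d be a nonempty compact convex set, let f be differentiable at points of X, let y ∈ ℝ^d with y ∉ X, and let x be the Euclidean projection of y onto X (the unique point of X closest to y in Euclidean norm). Define w = ∇f(x) + (max{0, −∇f(x)ᵀ(y − x)}/‖y − x‖²)·(y − x). Then ‖w‖ ≤ ‖∇f(x)‖, and for every u ∈ X, ∇f(x)ᵀ(x − u) ≤ wᵀ(y − u). -/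
open scoped RealInnerProductSpace

/-- domain-conversion surrogate gradient, Cutkosky–Orabona / Ashok et al.:
with `x` the Euclidean projection of `y ∉ X` onto `X` and
`w = ∇f(x) + (max{0, −⟨∇f(x), y − x⟩}/‖y − x‖²)·(y − x)`, we have `‖w‖ ≤ ‖∇f(x)‖` and
`⟨∇f(x), x − u⟩ ≤ ⟨w, y − u⟩` for all `u ∈ X`. -/
theorem stmt_6 {d : ℕ} (X : Set (EuclideanSpace ℝ (Fin d))) (hne : X.Nonempty)
    (hcmp : IsCompact X) (hconv : Convex ℝ X)
    (f : EuclideanSpace ℝ (Fin d) → ℝ)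
    (gradf : EuclideanSpace ℝ (Fin d) → EuclideanSpace ℝ (Fin d))
    (hgrad : ∀ z ∈ X, HasGradientAt f (gradf z) z)
    (y : EuclideanSpace ℝ (Fin d)) (hy : y ∉ X)
    (x : EuclideanSpace ℝ (Fin d)) (hx : x ∈ X)
    (hproj : ∀ z ∈ X, ‖x - y‖ ≤ ‖z - y‖)
    (w : EuclideanSpace ℝ (Fin d))
    (hw : w = gradf x + (max 0 (-⟪gradf x, y - x⟫) / ‖y - x‖^2) • (y - x)) :
    ‖w‖ ≤ ‖gradf x‖ ∧ ∀ u ∈ X, ⟪gradf x, x - u⟫ ≤ ⟪w, y - u⟫ := by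

  have hvne : y - x ≠ 0 := sub_ne_zero.mpr (fun h => hy (h ▸ hx))
  have hv2 : (0:ℝ) < ‖y - x‖^2 := pow_pos (norm_pos_iff.mpr hvne) 2
  set g := gradf x with hg
  set c : ℝ := max 0 (-⟪g, y - x⟫) / ‖y - x‖^2 with hc
  have hc0 : 0 ≤ c := div_nonneg (le_max_left _ _) (le_of_lt hv2)
  have hcv : c * ‖y - x‖^2 = max 0 (-⟪g, y - x⟫) := by
    rw [hc]; exact div_mul_cancel₀ _ (ne_of_gt hv2)
  have hP : ∀ u ∈ X, ⟪y - x, u - x⟫ ≤ 0 := by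
    have hinf : ‖y - x‖ = ⨅ w : X, ‖y - w‖ := by
      haveI : Nonempty X := hne.to_subtype
      apply le_antisymm
      · exact le_ciInf fun z => by simpa [norm_sub_rev] using hproj z z.2
      · exact ciInf_le ⟨0, fun b ⟨z, hz⟩ => hz ▸ norm_nonneg _⟩ (⟨x, hx⟩ : X)
    exact (norm_eq_iInf_iff_real_inner_le_zero hconv hx).mp hinf
  subst hw
  constructor
  · have hsq : ‖g + c • (y - x)‖^2 ≤ ‖g‖^2 := by
      have hexp : ‖g + c • (y - x)‖^2
          = ‖g‖^2 + 2 * (c * ⟪g, y - x⟫) + c^2 * ‖y - x‖^2 := by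
        rw [norm_add_sq_real, real_inner_smul_right, norm_smul, Real.norm_eq_abs,
          abs_of_nonneg hc0, mul_pow]
      rw [hexp]
      rcases le_or_gt 0 (⟪g, y - x⟫) with h | h
      · have : c = 0 := by
          rw [hc, max_eq_left (by linarith), zero_div]
        rw [this]; ring_nf; simp
      · have hmax : max 0 (-⟪g, y - x⟫) = -⟪g, y - x⟫ := max_eq_right (by linarith)
        nlinarith [hcv, hc0]
    nlinarith [norm_nonneg (g + c • (y - x)), norm_nonneg g, hsq]
  · intro u hu
    have hyu : y - u = (y - x) + (x - u) := by abel
    have h1 : ⟪y - x, x - u⟫ = -⟪y - x, u - x⟫ := by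
      rw [← inner_neg_right]; congr 1; abel
    have h2 : ⟪g + c • (y - x), y - u⟫
        = ⟪g, x - u⟫ + (⟪g, y - x⟫ + c * ‖y - x‖^2) + c * ⟪y - x, x - u⟫ := by
      rw [hyu, inner_add_left, inner_add_right, inner_add_right,
        real_inner_smul_left, real_inner_smul_left, real_inner_self_eq_norm_sq]
      ring
    rw [h2]
    have h3 : 0 ≤ ⟪g, y - x⟫ + c * ‖y - x‖^2 := by
      rw [hcv]; rcases le_max_iff.mpr (Or.inr (le_refl (-⟪g, y - x⟫))) with h
      linarith [le_max_right (0:ℝ) (-⟪g, y - x⟫)]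
    have h4 : 0 ≤ c * ⟪y - x, x - u⟫ := by
      have := hP u hu
      rw [h1]; exact mul_nonneg hc0 (by linarith)
    linarith
end

section
/- Let A ∈ ℝ^{d×d} be a positive-definite symmetric matrix, let γ > 0, let g, y ∈ ℝ^d, and set ŷ = y − (1/γ)·A⁻¹g. Let C ⊆ ℝ^d be a nonempty compact convex set and let u ∈ C. Suppose that either y' = ŷ, or y' is a Mahalanobis projection of ŷ onto C with respect to A. Then 2·gᵀ(y − u) ≤ (1/γ)·gᵀA⁻¹g + γ·‖y − u‖_A² − γ·‖y' − u‖_A². -/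
open scoped RealInnerProductSpace

lemma aux_mApp_comp {d : ℕ} (A B : Matrix (Fin d) (Fin d) ℝ) (x : EuclideanSpace ℝ (Fin d)) :
    mApp A (mApp B x) = mApp (A * B) x := by
  simp [mApp, Matrix.toEuclideanLin_apply, Matrix.mulVec_mulVec]

lemma aux_mApp_one {d : ℕ} (x : EuclideanSpace ℝ (Fin d)) : mApp 1 x = x := by
  simp [mApp, Matrix.toEuclideanLin_apply]

lemma aux_quad_nonneg {d : ℕ} {A : Matrix (Fin d) (Fin d) ℝ} (hA : A.PosDef)
    (x : EuclideanSpace ℝ (Fin d)) : 0 ≤ quadForm A x := by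
  have h := hA.posSemidef.re_dotProduct_nonneg x
  simpa [quadForm, mApp, Matrix.toEuclideanLin, dotProduct, Matrix.mulVec, real_inner_comm,
    PiLp.inner_apply, mul_comm, Finset.mul_sum] using h

lemma aux_mnorm_sq {d : ℕ} {A : Matrix (Fin d) (Fin d) ℝ} (hA : A.PosDef)
    (x : EuclideanSpace ℝ (Fin d)) : (mnorm A x)^2 = quadForm A x :=
  Real.sq_sqrt (aux_quad_nonneg hA x)

lemma aux_symm {d : ℕ} {A : Matrix (Fin d) (Fin d) ℝ} (hA : A.PosDef)
    (x y : EuclideanSpace ℝ (Fin d)) : ⟪x, mApp A y⟫ = ⟪y, mApp A x⟫ := by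
  have h := (Matrix.isHermitian_iff_isSymmetric.mp hA.1 x y).symm
  rw [mApp, mApp, h, real_inner_comm]

lemma aux_expand {d : ℕ} {A : Matrix (Fin d) (Fin d) ℝ} (hA : A.PosDef)
    (x y : EuclideanSpace ℝ (Fin d)) :
    quadForm A (x + y) = quadForm A x + 2 * ⟪x, mApp A y⟫ + quadForm A y := by
  have : mApp A (x + y) = mApp A x + mApp A y := by simp [mApp, map_add]
  rw [quadForm, this, inner_add_right, inner_add_left, inner_add_left]
  rw [aux_symm hA y x]
  simp only [quadForm]
  ring

lemma aux_expand_sub {d : ℕ} {A : Matrix (Fin d) (Fin d) ℝ} (hA : A.PosDef)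
    (x y : EuclideanSpace ℝ (Fin d)) :
    quadForm A (x - y) = quadForm A x - 2 * ⟪x, mApp A y⟫ + quadForm A y := by
  have h := aux_expand hA x (-y)
  have h1 : mApp A (-y) = -(mApp A y) := by simp [mApp, map_neg]
  have h2 : quadForm A (-y) = quadForm A y := by
    simp [quadForm, h1, inner_neg_neg, mApp, map_neg]
  rw [sub_eq_add_neg, h, h1, inner_neg_right, h2]; ring

lemma aux_quad_smul {d : ℕ} (A : Matrix (Fin d) (Fin d) ℝ) (c : ℝ)
    (x : EuclideanSpace ℝ (Fin d)) : quadForm A (c • x) = c^2 * quadForm A x := by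
  simp [quadForm, mApp, map_smul, inner_smul_left, inner_smul_right]; ring

lemma aux_quad_neg {d : ℕ} (A : Matrix (Fin d) (Fin d) ℝ)
    (x : EuclideanSpace ℝ (Fin d)) : quadForm A (-x) = quadForm A x := by
  simp [quadForm, mApp, map_neg]

/-- one-step mirror-descent inequality with optional Mahalanobis projection. -/
theorem stmt_10 {d : ℕ} (A : Matrix (Fin d) (Fin d) ℝ) (hA : A.PosDef)
    (γ : ℝ) (hγ : 0 < γ)
    (g y yhat : EuclideanSpace ℝ (Fin d))
    (hyhat : yhat = y - (1/γ) • mApp A⁻¹ g)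
    (C : Set (EuclideanSpace ℝ (Fin d))) (hne : C.Nonempty) (hcmp : IsCompact C)
    (hconv : Convex ℝ C)
    (u : EuclideanSpace ℝ (Fin d)) (hu : u ∈ C)
    (y' : EuclideanSpace ℝ (Fin d))
    (hy' : y' = yhat ∨ IsMProj A C yhat y') :
    2 * ⟪g, y - u⟫ ≤ (1/γ) * ⟪g, mApp A⁻¹ g⟫
      + γ * (mnorm A (y - u))^2 - γ * (mnorm A (y' - u))^2 := by
  set w := mApp A⁻¹ g with hw
  have hAw : mApp A w = g := by
    rw [hw, aux_mApp_comp, Matrix.mul_nonsing_inv A (isUnit_iff_ne_zero.mpr hA.det_pos.ne'),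
      aux_mApp_one]
  have hkey : γ * quadForm A (yhat - u) =
      γ * quadForm A (y - u) - 2 * ⟪g, y - u⟫ + (1/γ) * ⟪g, w⟫ := by
    have hdecomp : yhat - u = (y - u) - (1/γ) • w := by
      rw [hyhat]; abel
    have h1 : mApp A ((1/γ) • w) = (1/γ) • g := by
      rw [mApp, map_smul, ← mApp, hAw]
    have h2 : quadForm A ((1/γ) • w) = (1/γ)^2 * ⟪g, w⟫ := by
      rw [aux_quad_smul, quadForm, hAw, real_inner_comm]
    rw [hdecomp, aux_expand_sub hA, h1, inner_smul_right, h2, real_inner_comm (y - u) g]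
    field_simp
  -- reduce to quadForm comparison
  rw [aux_mnorm_sq hA, aux_mnorm_sq hA]
  have hmain : quadForm A (y' - u) ≤ quadForm A (yhat - u) := by
    rcases hy' with rfl | hproj
    · exact le_rfl
    · obtain ⟨hmem, hmin⟩ := hproj
      set v := u - y' with hv
      set a : ℝ := ⟪y' - yhat, mApp A v⟫ with ha
      set q : ℝ := quadForm A v with hq
      have hq0 : 0 ≤ q := aux_quad_nonneg hA v
      have hstep : ∀ t : ℝ, 0 < t → t ≤ 1 → 0 ≤ 2 * t * a + t^2 * q := by
        intro t ht0 ht1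
        have hz : y' + t • v ∈ C := by
          have := hconv hmem hu (by linarith : (0:ℝ) ≤ 1 - t) ht0.le (by ring)
          convert this using 1
          rw [hv]
          module
        have h1 : mnorm A (y' - yhat) ≤ mnorm A ((y' + t • v) - yhat) := hmin _ hz
        have h2 : quadForm A (y' - yhat) ≤ quadForm A ((y' + t • v) - yhat) := by
          rw [← aux_mnorm_sq hA, ← aux_mnorm_sq hA]
          exact pow_le_pow_left₀ (Real.sqrt_nonneg _) h1 2
        have h3 : (y' + t • v) - yhat = (y' - yhat) + t • v := by abel
        rw [h3, aux_expand hA] at h2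
        have h4 : mApp A (t • v) = t • mApp A v := by rw [mApp, map_smul, ← mApp]
        rw [h4, inner_smul_right, aux_quad_smul] at h2
        nlinarith [h2]
      have hanneg : 0 ≤ a := by
        by_contra hneg
        push_neg at hneg
        set t : ℝ := min 1 ((-a)/(q+1)) with ht
        have ht0 : 0 < t := lt_min one_pos (div_pos (by linarith) (by linarith))
        have ht1 : t ≤ 1 := min_le_left _ _
        have htq : t * q < -a := by
          have h5 : t ≤ (-a)/(q+1) := min_le_right _ _
          have h6 : t * q ≤ ((-a)/(q+1)) * q := by
            apply mul_le_mul_of_nonneg_right h5 hq0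
          have h7 : ((-a)/(q+1)) * q < -a := by
            rw [div_mul_eq_mul_div, div_lt_iff₀ (by linarith : (0:ℝ) < q + 1)]
            nlinarith
          linarith
        have := hstep t ht0 ht1
        nlinarith
      have hdec : yhat - u = (yhat - y') - v := by rw [hv]; abel
      have hyu : quadForm A (y' - u) = q := by
        rw [hq, hv, ← aux_quad_neg A (y' - u)]
        congr 1
        abel
      have hexp : quadForm A (yhat - u)
          = quadForm A (yhat - y') - 2 * ⟪yhat - y', mApp A v⟫ + q := by
        rw [hdec, aux_expand_sub hA, hq]
      have hcross : ⟪yhat - y', mApp A v⟫ = -a := by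
        rw [ha, ← inner_neg_left]
        congr 1
        abel
      have hpos : 0 ≤ quadForm A (yhat - y') := aux_quad_nonneg hA _
      rw [hyu, hexp, hcross]
      linarith
  nlinarith [mul_le_mul_of_nonneg_left hmain hγ.le]
end

section
/- Consider a run of LightONS over T rounds on the domain X with k ≥ 2, in which the Mahalanobis projections are computed only approximately: at each round t with ‖ŷ_{t+1}‖ > kD/2, the iterate y_{t+1} is a point of B(D/2) satisfying ‖y_{t+1} − y*_{t+1}‖ ≤ ζ_t, where y*_{t+1} is the (exact) Mahalanobis projection of ŷ_{t+1} onto B(D/2) with respect to A_t and ζ_t = min{ γ'/(2kD(c_g²G²t + ε)t²), (1/t)·√(γ'/(2(c_g²G²t + ε)t)) }. If moreover 2·γ'² ≤ 1, then for every t ∈ {1,…,T} and every u ∈ X: 2·v_tᵀ(y_t − u) ≤ (1/γ')·v_tᵀA_t⁻¹v_t + γ'·‖y_t − u‖_{A_t}² − γ'·‖y_{t+1} − u‖_{A_t}² + 1/t². -/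
open scoped RealInnerProductSpace

section LightONSAux

variable {d : ℕ}

lemma lons_dot_outer (v x y : EuclideanSpace ℝ (Fin d)) :
    dotProduct x ((outerProd v).mulVec y)
      = (dotProduct v x) * (dotProduct v y) := by
  simp only [dotProduct, Matrix.mulVec, outerProd, Matrix.of_apply, Finset.mul_sum,
    Finset.sum_mul]
  rw [Finset.sum_comm]
  apply Finset.sum_congr rfl; intro i _
  apply Finset.sum_congr rfl; intro j _
  ring

lemma lons_dot_self (x : EuclideanSpace ℝ (Fin d)) : dotProduct x x = ‖x‖^2 := by
  rw [show dotProduct x x = ⟪x,x⟫ from rfl, real_inner_self_eq_norm_sq]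

lemma lons_dot_smul_one (c : ℝ) (x y : EuclideanSpace ℝ (Fin d)) :
    dotProduct x ((c • (1 : Matrix (Fin d) (Fin d) ℝ)).mulVec y)
      = c * dotProduct x y := by
  rw [Matrix.smul_mulVec, Matrix.one_mulVec, dotProduct_smul, smul_eq_mul]

lemma lons_expand (B : Matrix (Fin d) (Fin d) ℝ)
    (hsym : ∀ a b : EuclideanSpace ℝ (Fin d),
      dotProduct a (B.mulVec b) = dotProduct b (B.mulVec a))
    (a b : Fin d → ℝ) (c : ℝ) :
    dotProduct (a - c•b) (B.mulVec (a - c•b))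
      = dotProduct a (B.mulVec a) - 2*c*dotProduct a (B.mulVec b)
        + c^2 * dotProduct b (B.mulVec b) := by
  have hs : dotProduct b (B.mulVec a) = dotProduct a (B.mulVec b) :=
    hsym (WithLp.toLp 2 b) (WithLp.toLp 2 a)
  rw [Matrix.mulVec_sub, Matrix.mulVec_smul, sub_dotProduct, dotProduct_sub,
    dotProduct_sub, dotProduct_smul, smul_dotProduct,
    smul_dotProduct, dotProduct_smul, hs]
  simp only [smul_eq_mul]; ring

end LightONSAux

set_option maxHeartbeats 2000000 in
/-- per-round inequality for LightONS with approximate Mahalanobis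
projections. Rounds are indexed by `t ∈ {0, …, T-1}` (round `t+1` in the paper); iterates
`x t`, `y t`, `v t` are the paper's `x_{t+1}`, `y_{t+1}`, `v_{t+1}`, `A t` is the paper's
`A_t`, and `ζ t` is the paper's `ζ_{t+1}`. -/
theorem stmt_11 {d T : ℕ}
    (X : Set (EuclideanSpace ℝ (Fin d))) (hne : X.Nonempty) (hcmp : IsCompact X)
    (hconv : Convex ℝ X)
    (D G α ε k cf cg : ℝ) (hD : 0 < D) (hG : 0 < G) (hα : 0 < α) (hε : 0 < ε)
    (hk : 2 ≤ k) (hcf : 1 ≤ cf) (hcg : 1 ≤ cg)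
    (hdiam : ∀ x ∈ X, ∀ y ∈ X, ‖x - y‖ ≤ D)
    (hXball : ∀ x ∈ X, ‖x‖ ≤ D / 2)
    (f : ℕ → EuclideanSpace ℝ (Fin d) → ℝ)
    (g : ℕ → EuclideanSpace ℝ (Fin d) → EuclideanSpace ℝ (Fin d))
    (hgrad : ∀ t < T, ∀ z ∈ X, HasGradientAt (f t) (g t z) z)
    (hgbound : ∀ t < T, ∀ z ∈ X, ‖g t z‖ ≤ G)
    (γ' : ℝ)
    (hγ' : γ' = (1/2) * min (min (1/(cf*cg*D*G)) (4/(cf*cg*(k+1)*D*G))) α)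
    (hγ'small : 2 * γ'^2 ≤ 1)
    (ζ : ℕ → ℝ)
    (hζ : ∀ t : ℕ, ζ t = min (γ' / (2*k*D*(cg^2*G^2*((t:ℝ)+1) + ε)*((t:ℝ)+1)^2))
      ((1/((t:ℝ)+1)) * Real.sqrt (γ' / (2*(cg^2*G^2*((t:ℝ)+1) + ε)*((t:ℝ)+1)))))
    (x y yhat v : ℕ → EuclideanSpace ℝ (Fin d)) (A : ℕ → Matrix (Fin d) (Fin d) ℝ)
    (hx0 : x 0 = 0) (hy0 : y 0 = 0)
    (hA0 : A 0 = ε • (1 : Matrix (Fin d) (Fin d) ℝ))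
    (hvbound : ∀ t < T, ‖v t‖ ≤ cg * G)
    (hsur : ∀ t < T, ∀ u ∈ X, ⟪g t (x t), x t - u⟫ ≤ cf * ⟪v t, y t - u⟫)
    (hAstep : ∀ t < T, A (t+1) = A t + outerProd (v t))
    (hyhat : ∀ t < T, yhat (t+1) = y t - (1/γ') • mApp (A (t+1))⁻¹ (v t))
    (hupd₁ : ∀ t < T, ‖yhat (t+1)‖ ≤ k*D/2 → y (t+1) = yhat (t+1))
    (hupd₂ : ∀ t < T, ¬ (‖yhat (t+1)‖ ≤ k*D/2) →
      ‖y (t+1)‖ ≤ D/2 ∧ ∃ ystar : EuclideanSpace ℝ (Fin d),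
        IsMProj (A (t+1)) (Metric.closedBall (0 : EuclideanSpace ℝ (Fin d)) (D/2))
          (yhat (t+1)) ystar ∧ ‖y (t+1) - ystar‖ ≤ ζ t)
    (hxproj : ∀ t < T, x (t+1) ∈ X ∧ ∀ z ∈ X, ‖x (t+1) - y (t+1)‖ ≤ ‖z - y (t+1)‖) :
    ∀ t < T, ∀ u ∈ X,
      2 * ⟪v t, y t - u⟫ ≤ (1/γ') * ⟪v t, mApp (A (t+1))⁻¹ (v t)⟫
        + γ' * (mnorm (A (t+1)) (y t - u))^2 - γ' * (mnorm (A (t+1)) (y (t+1) - u))^2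
        + 1 / ((t:ℝ)+1)^2 := by
  intro t ht u hu
  have ht1pos : (0:ℝ) < (t:ℝ)+1 := by positivity
  have ht1ge1 : (1:ℝ) ≤ (t:ℝ)+1 := by
    have := Nat.cast_nonneg (α := ℝ) t; linarith
  have hγpos : 0 < γ' := by
    have hk1 : (0:ℝ) < k + 1 := by linarith
    have h1 : 0 < 1/(cf*cg*D*G) := by positivity
    have h2 : 0 < 4/(cf*cg*(k+1)*D*G) := by positivity
    rw [hγ']
    have := lt_min (lt_min h1 h2) hα
    linarith
  have hlampos : (0:ℝ) < cg^2*G^2*((t:ℝ)+1) + ε := by positivity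
  -- symmetry and quadratic-form bounds for A s, by induction
  have hAfacts : ∀ s, s ≤ T → (∀ a b : EuclideanSpace ℝ (Fin d),
        dotProduct a ((A s).mulVec b) = dotProduct b ((A s).mulVec a))
      ∧ (∀ w : EuclideanSpace ℝ (Fin d), ε * ‖w‖^2 ≤ dotProduct w ((A s).mulVec w))
      ∧ (∀ w : EuclideanSpace ℝ (Fin d),
          dotProduct w ((A s).mulVec w) ≤ (cg^2*G^2*(s:ℝ) + ε) * ‖w‖^2) := by
    intro s
    induction s with
    | zero =>
      intro _
      rw [hA0]
      refine ⟨fun a b => ?_, fun w => ?_, fun w => ?_⟩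
      · rw [lons_dot_smul_one, lons_dot_smul_one, dotProduct_comm]
      · rw [lons_dot_smul_one, lons_dot_self]
      · rw [lons_dot_smul_one, lons_dot_self]
        push_cast
        nlinarith [sq_nonneg ‖w‖]
    | succ n ih =>
      intro hs
      have hnT : n < T := hs
      obtain ⟨hsym, hlb, hub⟩ := ih (le_of_lt hnT)
      rw [hAstep n hnT]
      have hCS : ∀ w : EuclideanSpace ℝ (Fin d),
          (dotProduct (v n) w)^2 ≤ cg^2*G^2*‖w‖^2 := by
        intro w
        have h1 : |⟪v n, w⟫| ≤ ‖v n‖ * ‖w‖ := abs_real_inner_le_norm _ _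
        have h2 : ‖v n‖ ≤ cg * G := hvbound n hnT
        have h4 : |⟪v n, w⟫| ≤ cg * G * ‖w‖ :=
          le_trans h1 (mul_le_mul_of_nonneg_right h2 (norm_nonneg w))
        have h3 : (dotProduct (v n) w) = ⟪v n, w⟫ := by
          rw [EuclideanSpace.inner_eq_star_dotProduct, dotProduct_comm]; rfl
        rw [h3]
        calc (⟪v n, w⟫ : ℝ)^2 = |⟪v n, w⟫|^2 := (sq_abs _).symm
          _ ≤ (cg * G * ‖w‖)^2 := pow_le_pow_left₀ (abs_nonneg _) h4 2
          _ = cg^2*G^2*‖w‖^2 := by ring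
      refine ⟨fun a b => ?_, fun w => ?_, fun w => ?_⟩
      · rw [Matrix.add_mulVec, dotProduct_add, Matrix.add_mulVec, dotProduct_add,
          hsym a b, lons_dot_outer, lons_dot_outer, mul_comm]
      · have h := hlb w
        rw [Matrix.add_mulVec, dotProduct_add, lons_dot_outer]
        linarith [mul_self_nonneg (dotProduct (v n) w)]
      · have h := hub w
        have h2x : dotProduct (v n) w * dotProduct (v n) w
            ≤ cg^2*G^2*‖w‖^2 := by rw [← pow_two]; exact hCS w
        rw [Matrix.add_mulVec, dotProduct_add, lons_dot_outer]
        push_cast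
        have hexp : (cg^2*G^2*((n:ℝ)+1)+ε)*‖w‖^2
            = (cg^2*G^2*(n:ℝ)+ε)*‖w‖^2 + cg^2*G^2*‖w‖^2 := by ring
        rw [hexp]
        exact add_le_add h h2x
  obtain ⟨hsym, hlb, hub'⟩ := hAfacts (t+1) ht
  have hub : ∀ z : EuclideanSpace ℝ (Fin d),
      dotProduct z ((A (t+1)).mulVec z) ≤ (cg^2*G^2*((t:ℝ)+1) + ε) * ‖z‖^2 := by
    intro z; have h := hub' z; push_cast at h; exact h
  have hQnn : ∀ z : EuclideanSpace ℝ (Fin d),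
      0 ≤ dotProduct z ((A (t+1)).mulVec z) :=
    fun z => le_trans (by positivity) (hlb z)
  have hmnsq : ∀ z : EuclideanSpace ℝ (Fin d),
      (mnorm (A (t+1)) z)^2 = dotProduct z ((A (t+1)).mulVec z) :=
    fun z => by
      have e : quadForm (A (t+1)) z = dotProduct z ((A (t+1)).mulVec z) := by
        rw [quadForm, EuclideanSpace.inner_eq_star_dotProduct, dotProduct_comm]; rfl
      rw [mnorm, e]; exact Real.sq_sqrt (hQnn z)
  have hzero_of_Q : ∀ z : EuclideanSpace ℝ (Fin d),
      dotProduct z ((A (t+1)).mulVec z) ≤ 0 → z = 0 := by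
    intro z hz
    have h1 := hlb z
    have h3 : ε * ‖z‖^2 ≤ 0 := le_trans h1 hz
    have h4 : ‖z‖ ≤ 0 := by
      by_contra hc
      push_neg at hc
      nlinarith [mul_pos hε (mul_pos hc hc)]
    exact norm_eq_zero.mp (le_antisymm h4 (norm_nonneg z))
  have hdet : (A (t+1)).det ≠ 0 := by
    intro h
    obtain ⟨z, hz0, hz⟩ := Matrix.exists_mulVec_eq_zero_iff.mpr h
    have h1 : dotProduct z ((A (t+1)).mulVec z) ≤ 0 := by
      rw [hz, dotProduct_zero]
    exact hz0 (by simpa using congrArg WithLp.ofLp (hzero_of_Q (WithLp.toLp 2 z) h1))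
  have hBinv : ∀ z : EuclideanSpace ℝ (Fin d),
      (A (t+1)).mulVec ((A (t+1))⁻¹.mulVec z) = z := by
    intro z
    rw [Matrix.mulVec_mulVec, Matrix.mul_nonsing_inv _ (isUnit_iff_ne_zero.mpr hdet),
      Matrix.one_mulVec]
  -- Cauchy–Schwarz for the quadratic form
  have hCSB : ∀ a b : EuclideanSpace ℝ (Fin d),
      dotProduct a ((A (t+1)).mulVec b)
        ≤ Real.sqrt (dotProduct a ((A (t+1)).mulVec a))
          * Real.sqrt (dotProduct b ((A (t+1)).mulVec b)) := by
    intro a b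
    have hsq : (dotProduct a ((A (t+1)).mulVec b))^2
        ≤ dotProduct a ((A (t+1)).mulVec a)
          * dotProduct b ((A (t+1)).mulVec b) := by
      by_cases hb : dotProduct b ((A (t+1)).mulVec b) ≤ 0
      · have hb0 : b = 0 := hzero_of_Q b hb
        rw [hb0]
        rw [show ((0 : EuclideanSpace ℝ (Fin d)) : Fin d → ℝ) = (0 : Fin d → ℝ) from rfl,
          Matrix.mulVec_zero, dotProduct_zero, dotProduct_zero]
        norm_num
      · push_neg at hb
        have h0 := hQnn ((dotProduct b ((A (t+1)).mulVec b)) • a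
          - (dotProduct a ((A (t+1)).mulVec b)) • b)
        simp only [WithLp.ofLp_sub, WithLp.ofLp_smul, WithLp.ofLp_add, WithLp.ofLp_neg] at h0
        rw [lons_expand _ hsym] at h0
        simp only [Matrix.mulVec_smul, smul_dotProduct, dotProduct_smul, smul_eq_mul] at h0
        nlinarith [h0, hb]
    calc dotProduct a ((A (t+1)).mulVec b)
        ≤ |dotProduct a ((A (t+1)).mulVec b)| := le_abs_self _
      _ = Real.sqrt ((dotProduct a ((A (t+1)).mulVec b))^2) :=
          (Real.sqrt_sq_eq_abs _).symm
      _ ≤ Real.sqrt (dotProduct a ((A (t+1)).mulVec a)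
            * dotProduct b ((A (t+1)).mulVec b)) := Real.sqrt_le_sqrt hsq
      _ = Real.sqrt (dotProduct a ((A (t+1)).mulVec a))
            * Real.sqrt (dotProduct b ((A (t+1)).mulVec b)) :=
          Real.sqrt_mul (hQnn a) _
  have hγne : γ' ≠ 0 := ne_of_gt hγpos
  -- key algebraic identity
  have hyhat2 : yhat (t+1) - u = (y t - u) - (1/γ') • mApp (A (t+1))⁻¹ (v t) := by
    rw [hyhat t ht]; abel
  have hBp : (A (t+1)).mulVec (mApp (A (t+1))⁻¹ (v t)) = v t := hBinv (v t)
  have hQhat : dotProduct (yhat (t+1) - u) ((A (t+1)).mulVec (yhat (t+1) - u))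
      = dotProduct (y t - u) ((A (t+1)).mulVec (y t - u))
        - 2*(1/γ')*(dotProduct (v t) (y t - u))
        + (1/γ')^2 * (dotProduct (v t) (mApp (A (t+1))⁻¹ (v t))) := by
    have h2 := congrArg WithLp.ofLp hyhat2
    simp only [WithLp.ofLp_sub, WithLp.ofLp_smul, WithLp.ofLp_add, WithLp.ofLp_neg] at h2 ⊢
    rw [h2, lons_expand _ hsym, hBp,
      dotProduct_comm (WithLp.ofLp (v t)) (WithLp.ofLp (y t) - WithLp.ofLp u),
      dotProduct_comm (WithLp.ofLp (v t)) (WithLp.ofLp (mApp (A (t+1))⁻¹ (v t)))]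
  -- the projection step
  have key : γ' * dotProduct (y (t+1) - u) ((A (t+1)).mulVec (y (t+1) - u))
      ≤ γ' * dotProduct (yhat (t+1) - u) ((A (t+1)).mulVec (yhat (t+1) - u))
        + 1/((t:ℝ)+1)^2 := by
    by_cases hcase : ‖yhat (t+1)‖ ≤ k*D/2
    · rw [hupd₁ t ht hcase]
      have h5 : (0:ℝ) ≤ 1/((t:ℝ)+1)^2 := by positivity
      linarith
    · obtain ⟨hyb, ystar, ⟨hstar_mem, hstar_min⟩, hnear⟩ := hupd₂ t ht hcase
      have hkpos : (0:ℝ) < k := by linarith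
      have hstar_ball : ‖ystar‖ ≤ D/2 := by
        simpa [mem_closedBall_zero_iff] using hstar_mem
      have hu_ball : ‖u‖ ≤ D/2 := hXball u hu
      -- obtuse-angle property of the exact Mahalanobis projection
      have hobt : 0 ≤ dotProduct (ystar - yhat (t+1)) ((A (t+1)).mulVec (u - ystar)) := by
        have hQb : 0 ≤ dotProduct (u - ystar) ((A (t+1)).mulVec (u - ystar)) := hQnn (u - ystar)
        have hmain : ∀ s : ℝ, 0 < s → s ≤ 1 →
            -2*(dotProduct (ystar - yhat (t+1)) ((A (t+1)).mulVec (u - ystar)))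
              ≤ s * (dotProduct (u - ystar) ((A (t+1)).mulVec (u - ystar))) := by
          intro s hs0 hs1
          have hzmem : ystar + s • (u - ystar)
              ∈ Metric.closedBall (0:EuclideanSpace ℝ (Fin d)) (D/2) := by
            rw [mem_closedBall_zero_iff]
            have hcomb : ystar + s • (u - ystar) = (1-s) • ystar + s • u := by module
            rw [hcomb]
            have htri := norm_add_le ((1-s) • ystar) (s • u)
            rw [norm_smul, norm_smul] at htri
            have e1 : ‖(1-s : ℝ)‖ = 1 - s := Real.norm_of_nonneg (by linarith)
            have e2 : ‖(s : ℝ)‖ = s := Real.norm_of_nonneg hs0.le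
            rw [e1, e2] at htri
            nlinarith [hstar_ball, hu_ball, norm_nonneg ystar, norm_nonneg u]
          have hmin := hstar_min _ hzmem
          have hQle : dotProduct (ystar - yhat (t+1)) ((A (t+1)).mulVec (ystar - yhat (t+1)))
              ≤ dotProduct (ystar + s • (u - ystar) - yhat (t+1)) ((A (t+1)).mulVec (ystar + s • (u - ystar) - yhat (t+1))) := by
            have hmnn : (0:ℝ) ≤ mnorm (A (t+1)) (ystar - yhat (t+1)) := Real.sqrt_nonneg _
            have h1 := pow_le_pow_left₀ hmnn hmin 2
            rw [hmnsq, hmnsq] at h1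
            exact h1
          have hz2 : ystar + s • (u - ystar) - yhat (t+1)
              = (ystar - yhat (t+1)) - (-s) • (u - ystar) := by module
          have hz2' : WithLp.ofLp ystar + s • (WithLp.ofLp u - WithLp.ofLp ystar) - WithLp.ofLp (yhat (t+1))
              = (WithLp.ofLp ystar - WithLp.ofLp (yhat (t+1))) - (-s) • (WithLp.ofLp u - WithLp.ofLp ystar) := by module
          simp only [WithLp.ofLp_sub, WithLp.ofLp_smul, WithLp.ofLp_add, WithLp.ofLp_neg] at hQle ⊢
          rw [hz2', lons_expand _ hsym] at hQle
          nlinarith [hQle, hs0, mul_pos hs0 hs0]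
        have h0 : -2*(dotProduct (ystar - yhat (t+1)) ((A (t+1)).mulVec (u - ystar))) ≤ 0 := by
          apply le_of_forall_pos_le_add
          intro ε' hε'
          have hQb1 : (0:ℝ) < dotProduct (u - ystar) ((A (t+1)).mulVec (u - ystar)) + 1 := by linarith
          have hsmin : 0 < min 1 (ε'/(dotProduct (u - ystar) ((A (t+1)).mulVec (u - ystar)) + 1)) :=
            lt_min one_pos (div_pos hε' hQb1)
          refine le_trans (hmain _ hsmin (min_le_left _ _)) ?_
          have h1 : min 1 (ε'/(dotProduct (u - ystar) ((A (t+1)).mulVec (u - ystar)) + 1))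
                * (dotProduct (u - ystar) ((A (t+1)).mulVec (u - ystar)))
              ≤ (ε'/(dotProduct (u - ystar) ((A (t+1)).mulVec (u - ystar)) + 1))
                * (dotProduct (u - ystar) ((A (t+1)).mulVec (u - ystar))) :=
            mul_le_mul_of_nonneg_right (min_le_right _ _) hQb
          have h2 : (ε'/(dotProduct (u - ystar) ((A (t+1)).mulVec (u - ystar)) + 1))
                * (dotProduct (u - ystar) ((A (t+1)).mulVec (u - ystar))) ≤ ε' := by
            rw [div_mul_eq_mul_div, div_le_iff₀ hQb1]
            nlinarith [hε'.le, hQb]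
          linarith
        linarith
      -- the projection is closer to u than yhat is
      have hcross0 : dotProduct (ystar - u) ((A (t+1)).mulVec (yhat (t+1) - ystar))
          = dotProduct (ystar - yhat (t+1)) ((A (t+1)).mulVec (u - ystar)) := by
        simp only [WithLp.ofLp_sub, Matrix.mulVec_sub, dotProduct_sub, sub_dotProduct]
        linarith [hsym ystar (yhat (t+1)), hsym u (yhat (t+1)), hsym u ystar]
      have hstarle : dotProduct (ystar - u) ((A (t+1)).mulVec (ystar - u))
          ≤ dotProduct (yhat (t+1) - u) ((A (t+1)).mulVec (yhat (t+1) - u)) := by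
        have hdecomp : yhat (t+1) - u = (ystar - u) - (-1 : ℝ) • (yhat (t+1) - ystar) := by module
        have hdecomp' : WithLp.ofLp (yhat (t+1)) - WithLp.ofLp u = (WithLp.ofLp ystar - WithLp.ofLp u)
            - (-1 : ℝ) • (WithLp.ofLp (yhat (t+1)) - WithLp.ofLp ystar) := by module
        have c1 := hcross0
        have c2 := hobt
        have c3 := hQnn (yhat (t+1) - ystar)
        simp only [WithLp.ofLp_sub, WithLp.ofLp_smul, WithLp.ofLp_add, WithLp.ofLp_neg] at c1 c2 c3 ⊢
        rw [hdecomp', lons_expand _ hsym]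
        nlinarith [c1, c2, c3]
      -- quantitative bounds
      have hδζ : ‖y (t+1) - ystar‖ ≤ ζ t := hnear
      have hζ1nn : (0:ℝ) ≤ γ' / (2*k*D*(cg^2*G^2*((t:ℝ)+1) + ε)*((t:ℝ)+1)^2) := by positivity
      have hζt1 : ζ t ≤ γ' / (2*k*D*(cg^2*G^2*((t:ℝ)+1) + ε)*((t:ℝ)+1)^2) := by
        rw [hζ t]; exact min_le_left _ _
      have hζt2 : ζ t ≤ (1/((t:ℝ)+1)) * Real.sqrt (γ' / (2*(cg^2*G^2*((t:ℝ)+1) + ε)*((t:ℝ)+1))) := by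
        rw [hζ t]; exact min_le_right _ _
      have hnδ2a : ‖y (t+1) - ystar‖^2 ≤ (γ' / (2*k*D*(cg^2*G^2*((t:ℝ)+1) + ε)*((t:ℝ)+1)^2))^2 :=
        pow_le_pow_left₀ (norm_nonneg _) (le_trans hδζ hζt1) 2
      have hnδ2b : ‖y (t+1) - ystar‖^2 ≤ γ' / (2*(cg^2*G^2*((t:ℝ)+1) + ε)*((t:ℝ)+1)) / ((t:ℝ)+1)^2 := by
        have h2 := pow_le_pow_left₀ (norm_nonneg _) (le_trans hδζ hζt2) 2
        have harg : (0:ℝ) ≤ γ' / (2*(cg^2*G^2*((t:ℝ)+1) + ε)*((t:ℝ)+1)) := by positivity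
        rw [mul_pow, Real.sq_sqrt harg] at h2
        refine le_trans h2 (le_of_eq ?_)
        field_simp
      have hQδa : dotProduct (y (t+1) - ystar) ((A (t+1)).mulVec (y (t+1) - ystar))
          ≤ (cg^2*G^2*((t:ℝ)+1) + ε) * (γ' / (2*k*D*(cg^2*G^2*((t:ℝ)+1) + ε)*((t:ℝ)+1)^2))^2 :=
        le_trans (hub _) (mul_le_mul_of_nonneg_left hnδ2a hlampos.le)
      have hQδb : dotProduct (y (t+1) - ystar) ((A (t+1)).mulVec (y (t+1) - ystar)) ≤ γ' / (2*((t:ℝ)+1)^3) := by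
        refine le_trans (le_trans (hub _)
          (mul_le_mul_of_nonneg_left hnδ2b hlampos.le)) (le_of_eq ?_)
        field_simp
      have hQsu : dotProduct (ystar - u) ((A (t+1)).mulVec (ystar - u)) ≤ (cg^2*G^2*((t:ℝ)+1) + ε) * D^2 := by
        have hn : ‖ystar - u‖ ≤ D := by
          have := norm_sub_le ystar u
          linarith
        have hn2 : ‖ystar - u‖^2 ≤ D^2 := pow_le_pow_left₀ (norm_nonneg _) hn 2
        exact le_trans (hub _) (mul_le_mul_of_nonneg_left hn2 hlampos.le)
      -- cross-term bound
      have hcross2 : dotProduct (ystar - u) ((A (t+1)).mulVec (y (t+1) - ystar)) ≤ γ' / (2*k*((t:ℝ)+1)^2) := by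
        have h := hCSB (ystar - u) (y (t+1) - ystar)
        have s1 : Real.sqrt (dotProduct (ystar - u) ((A (t+1)).mulVec (ystar - u)))
            ≤ Real.sqrt (cg^2*G^2*((t:ℝ)+1) + ε) * D := by
          refine le_trans (Real.sqrt_le_sqrt hQsu) (le_of_eq ?_)
          rw [Real.sqrt_mul hlampos.le, Real.sqrt_sq hD.le]
        have s2 : Real.sqrt (dotProduct (y (t+1) - ystar) ((A (t+1)).mulVec (y (t+1) - ystar)))
            ≤ Real.sqrt (cg^2*G^2*((t:ℝ)+1) + ε) * (γ' / (2*k*D*(cg^2*G^2*((t:ℝ)+1) + ε)*((t:ℝ)+1)^2)) := by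
          refine le_trans (Real.sqrt_le_sqrt hQδa) (le_of_eq ?_)
          rw [Real.sqrt_mul hlampos.le, Real.sqrt_sq hζ1nn]
        have hprod : Real.sqrt (dotProduct (ystar - u) ((A (t+1)).mulVec (ystar - u)))
              * Real.sqrt (dotProduct (y (t+1) - ystar) ((A (t+1)).mulVec (y (t+1) - ystar)))
            ≤ (Real.sqrt (cg^2*G^2*((t:ℝ)+1) + ε) * D) * (Real.sqrt (cg^2*G^2*((t:ℝ)+1) + ε) * (γ' / (2*k*D*(cg^2*G^2*((t:ℝ)+1) + ε)*((t:ℝ)+1)^2))) := by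
          apply mul_le_mul s1 s2 (Real.sqrt_nonneg _)
          positivity
        refine le_trans h (le_trans hprod (le_of_eq ?_))
        rw [show (Real.sqrt (cg^2*G^2*((t:ℝ)+1) + ε) * D) * (Real.sqrt (cg^2*G^2*((t:ℝ)+1) + ε) * (γ' / (2*k*D*(cg^2*G^2*((t:ℝ)+1) + ε)*((t:ℝ)+1)^2)))
            = (Real.sqrt (cg^2*G^2*((t:ℝ)+1) + ε) * Real.sqrt (cg^2*G^2*((t:ℝ)+1) + ε)) * (D * (γ' / (2*k*D*(cg^2*G^2*((t:ℝ)+1) + ε)*((t:ℝ)+1)^2))) from by ring,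
          Real.mul_self_sqrt hlampos.le]
        field_simp
      -- expansion of the approximate iterate
      have hdecomp2 : y (t+1) - u = (ystar - u) - (-1:ℝ) • (y (t+1) - ystar) := by module
      have hQy : dotProduct (y (t+1) - u) ((A (t+1)).mulVec (y (t+1) - u))
          = dotProduct (ystar - u) ((A (t+1)).mulVec (ystar - u))
            + 2 * (dotProduct (ystar - u) ((A (t+1)).mulVec (y (t+1) - ystar)))
            + dotProduct (y (t+1) - ystar) ((A (t+1)).mulVec (y (t+1) - ystar)) := by
        have hdecomp2' : WithLp.ofLp (y (t+1)) - WithLp.ofLp u = (WithLp.ofLp ystar - WithLp.ofLp u)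
            - (-1:ℝ) • (WithLp.ofLp (y (t+1)) - WithLp.ofLp ystar) := by module
        simp only [WithLp.ofLp_sub, WithLp.ofLp_smul, WithLp.ofLp_add, WithLp.ofLp_neg]
        rw [hdecomp2', lons_expand _ hsym]
        ring
      -- final numeric estimate
      have m0 : γ' * (dotProduct (y (t+1) - u) ((A (t+1)).mulVec (y (t+1) - u)))
          = γ' * (dotProduct (ystar - u) ((A (t+1)).mulVec (ystar - u)))
            + 2 * γ' * (dotProduct (ystar - u) ((A (t+1)).mulVec (y (t+1) - ystar)))
            + γ' * (dotProduct (y (t+1) - ystar) ((A (t+1)).mulVec (y (t+1) - ystar))) := by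
        rw [hQy]; ring
      have m1 := mul_le_mul_of_nonneg_left hcross2 hγpos.le
      have m2 := mul_le_mul_of_nonneg_left hQδb hγpos.le
      have m3 := mul_le_mul_of_nonneg_left hstarle hγpos.le
      have hb1 : γ' * (γ' / (2*k*((t:ℝ)+1)^2)) ≤ 1/(4*((t:ℝ)+1)^2) := by
        rw [show γ' * (γ' / (2*k*((t:ℝ)+1)^2)) = γ'^2 / (2*k*((t:ℝ)+1)^2) from by ring,
          div_le_div_iff₀ (by positivity) (by positivity)]
        nlinarith [mul_pos ht1pos ht1pos, hγ'small, hk, sq_nonneg γ']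
      have hb2 : γ' * (γ' / (2*((t:ℝ)+1)^3)) ≤ 1/(4*((t:ℝ)+1)^2) := by
        rw [show γ' * (γ' / (2*((t:ℝ)+1)^3)) = γ'^2 / (2*((t:ℝ)+1)^3) from by ring,
          div_le_div_iff₀ (by positivity) (by positivity)]
        nlinarith [mul_pos ht1pos ht1pos, hγ'small, ht1ge1,
          mul_pos (mul_pos ht1pos ht1pos) ht1pos]
      have hb3 : 1/(4*((t:ℝ)+1)^2) + 1/(4*((t:ℝ)+1)^2) ≤ 1/((t:ℝ)+1)^2 := by
        rw [← add_div, div_le_div_iff₀ (by positivity) (by positivity)]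
        nlinarith [mul_pos ht1pos ht1pos]
      have h4 : 1/(4*((t:ℝ)+1)^2) = (1/4) * (1/((t:ℝ)+1)^2) := by
        rw [one_div, mul_inv]
        ring
      rw [h4] at hb1 hb2 hb3
      linarith [m0, m1, m2, m3, hb1, hb2, hb3]
  -- assemble
  rw [hmnsq, hmnsq]
  have hi : ∀ a b : EuclideanSpace ℝ (Fin d), ⟪a, b⟫ = dotProduct a b := fun a b => by
    rw [EuclideanSpace.inner_eq_star_dotProduct, dotProduct_comm]; rfl
  rw [hi, hi]
  show 2 * dotProduct (v t) (y t - u)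
      ≤ (1/γ') * dotProduct (v t) (mApp (A (t+1))⁻¹ (v t))
        + γ' * dotProduct (y t - u) ((A (t+1)).mulVec (y t - u))
        - γ' * dotProduct (y (t+1) - u) ((A (t+1)).mulVec (y (t+1) - u))
        + 1/((t:ℝ)+1)^2
  have hkey2 : γ' * dotProduct (yhat (t+1) - u) ((A (t+1)).mulVec (yhat (t+1) - u))
      = γ' * dotProduct (y t - u) ((A (t+1)).mulVec (y t - u))
        - 2*(dotProduct (v t) (y t - u))
        + (1/γ') * (dotProduct (v t) (mApp (A (t+1))⁻¹ (v t))) := by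
    rw [hQhat]
    field_simp
  linarith [key, hkey2]
end

section
/- Let A ∈ ℝ^{d×d} be a positive-definite symmetric matrix with smallest eigenvalue λ_min, let y ∈ ℝ^d with y ≠ 0, let R > 0 and ζ > 0. Suppose μ* ≥ 0 is such that x* = (A + μ*I)⁻¹Ay satisfies ‖x*‖ = R. Let μ̃ ≥ 0 with |μ̃ − μ*| < (λ_min/‖y‖)·ζ, set x̃ = (A + μ̃I)⁻¹Ay and x = (R/‖x̃‖)·x̃. Then ‖x‖ ≤ R and ‖x − x*‖ ≤ ζ. -/
open scoped RealInnerProductSpace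

set_option maxHeartbeats 2000000 in
/-- truncation-error transfer for the approximate dual variable:
if `|μ̃ − μ*| < (λ_min/‖y‖)·ζ` then the renormalized point `x = (R/‖x̃‖)·x̃` with
`x̃ = (A + μ̃I)⁻¹Ay` satisfies `‖x‖ ≤ R` and `‖x − x*‖ ≤ ζ`. -/
theorem stmt_15 {d : ℕ} (A : Matrix (Fin d) (Fin d) ℝ) (hA : A.PosDef)
    (lmin : ℝ) (hlmin : IsLeast (Set.range hA.1.eigenvalues) lmin)
    (y : EuclideanSpace ℝ (Fin d)) (hy : y ≠ 0)
    (R ζ : ℝ) (hR : 0 < R) (hζ : 0 < ζ)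
    (μstar : ℝ) (hμstar : 0 ≤ μstar)
    (xstar : EuclideanSpace ℝ (Fin d))
    (hxstar : xstar = mApp (A + μstar • (1 : Matrix (Fin d) (Fin d) ℝ))⁻¹ (mApp A y))
    (hxstarR : ‖xstar‖ = R)
    (μt : ℝ) (hμt : 0 ≤ μt) (hclose : |μt - μstar| < (lmin / ‖y‖) * ζ)
    (xt : EuclideanSpace ℝ (Fin d))
    (hxt : xt = mApp (A + μt • (1 : Matrix (Fin d) (Fin d) ℝ))⁻¹ (mApp A y))
    (x : EuclideanSpace ℝ (Fin d)) (hx : x = (R / ‖xt‖) • xt) :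
    ‖x‖ ≤ R ∧ ‖x - xstar‖ ≤ ζ := by
  classical
  have hH : A.IsHermitian := hA.1
  set B := hH.eigenvectorBasis with hBdef
  set lam := hH.eigenvalues with hlamdef
  have hlampos : ∀ i, 0 < lam i := fun i => hA.eigenvalues_pos i
  have hlmin_le : ∀ i, lmin ≤ lam i := fun i => hlmin.2 ⟨i, rfl⟩
  have hL : 0 < lmin := by obtain ⟨i, hi⟩ := hlmin.1; exact hi ▸ hlampos i
  have hW : (0:ℝ) < ‖y‖ := norm_pos_iff.mpr hy
  -- Parseval
  have parseval : ∀ u v : EuclideanSpace ℝ (Fin d), ⟪u, v⟫ = ∑ i, ⟪B i, u⟫ * ⟪B i, v⟫ := by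
    intro u v
    rw [← B.repr.inner_map_map u v, PiLp.inner_apply]
    simp only [RCLike.inner_apply, conj_trivial, B.repr_apply_apply]
    exact Finset.sum_congr rfl fun i _ => mul_comm _ _
  have mApp_mul : ∀ (M N : Matrix (Fin d) (Fin d) ℝ) v, mApp M (mApp N v) = mApp (M * N) v := by
    intro M N v
    simp [mApp, Matrix.toEuclideanLin_apply, Matrix.mulVec_mulVec]
  have mApp_one : ∀ v : EuclideanSpace ℝ (Fin d), mApp 1 v = v := by
    intro v; simp [mApp, Matrix.toEuclideanLin_apply]
  have mApp_eig : ∀ (v : EuclideanSpace ℝ (Fin d)) i, ⟪B i, mApp A v⟫ = lam i * ⟪B i, v⟫ := by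
    intro v i
    have hsym := (Matrix.isHermitian_iff_isSymmetric.1 hH) (B i) v
    have h1 : mApp A (B i) = lam i • B i := by
      have := hH.mulVec_eigenvectorBasis i
      simp only [mApp, Matrix.toEuclideanLin_apply]
      exact congrArg _ this
    rw [show Matrix.toEuclideanLin A v = mApp A v from rfl] at hsym
    rw [← hsym, show Matrix.toEuclideanLin A (B i) = mApp A (B i) from rfl, h1,
      real_inner_smul_left]
  set a : Fin d → ℝ := fun i => ⟪B i, y⟫ with hadef
  -- key coordinate computation
  have key : ∀ μ : ℝ, 0 ≤ μ → ∀ i,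
      ⟪B i, mApp (A + μ • (1 : Matrix (Fin d) (Fin d) ℝ))⁻¹ (mApp A y)⟫
        = lam i / (lam i + μ) * a i := by
    intro μ hμ i
    set P := A + μ • (1 : Matrix (Fin d) (Fin d) ℝ) with hPdef
    have hPD : P.PosDef := by
      have hsm : (μ • (1 : Matrix (Fin d) (Fin d) ℝ)).IsHermitian := by
        show Matrix.conjTranspose _ = _
        rw [Matrix.conjTranspose_smul, Matrix.isHermitian_one.eq, star_trivial]
      refine Matrix.PosDef.of_dotProduct_mulVec_pos (hH.add hsm) ?_
      intro v hv
      have h1 := hA.dotProduct_mulVec_pos hv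
      have h2 : (0:ℝ) ≤ μ * dotProduct (star v) v := by
        apply mul_nonneg hμ
        simp only [star_trivial]
        exact Finset.sum_nonneg fun i _ => mul_self_nonneg _
      have h3 : dotProduct (star v) (P.mulVec v)
          = dotProduct (star v) (A.mulVec v) + μ * dotProduct (star v) v := by
        simp [hPdef, Matrix.add_mulVec, Matrix.smul_mulVec, Matrix.one_mulVec,
          dotProduct_add, dotProduct_smul, smul_eq_mul]
      show 0 < dotProduct (star v) (P.mulVec v)
      rw [h3]
      have h1' : 0 < dotProduct (star v) (A.mulVec v) := h1
      linarith
    have hdet : IsUnit P.det := P.isUnit_iff_isUnit_det.mp hPD.isUnit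
    set w := mApp P⁻¹ (mApp A y) with hwdef
    have hPw : mApp P w = mApp A y := by
      rw [hwdef, mApp_mul, Matrix.mul_nonsing_inv _ hdet, mApp_one]
    have hsplit : mApp P w = mApp A w + μ • w := by
      simp only [mApp, hPdef, map_add, map_smul, LinearMap.add_apply, LinearMap.smul_apply]
      congr 1
      exact congrArg (μ • ·) (mApp_one w)
    have hco : (lam i + μ) * ⟪B i, w⟫ = lam i * a i := by
      have h1 : ⟪B i, mApp P w⟫ = lam i * ⟪B i, w⟫ + μ * ⟪B i, w⟫ := by
        rw [hsplit, inner_add_right, mApp_eig, real_inner_smul_right]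
      have h2 : ⟪B i, mApp P w⟫ = lam i * a i := by rw [hPw, mApp_eig]
      rw [h1] at h2; linarith
    have hpos : 0 < lam i + μ := by have := hlampos i; linarith
    have h9 : ⟪B i, w⟫ = lam i * a i / (lam i + μ) := by
      rw [eq_div_iff hpos.ne']; linarith [hco]
    show ⟪B i, w⟫ = _
    rw [h9]; ring
  -- coordinates of xstar and xt
  set cs : Fin d → ℝ := fun i => lam i / (lam i + μstar) * a i with hcsdef
  set ct : Fin d → ℝ := fun i => lam i / (lam i + μt) * a i with hctdef
  have hcs : ∀ i, ⟪B i, xstar⟫ = cs i := fun i => by rw [hxstar]; exact key μstar hμstar i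
  have hct : ∀ i, ⟪B i, xt⟫ = ct i := fun i => by rw [hxt]; exact key μt hμt i
  set t := ‖xt‖ with htdef
  have hR2 : R ^ 2 = ∑ i, cs i ^ 2 := by
    rw [← hxstarR, ← real_inner_self_eq_norm_sq, parseval]
    exact Finset.sum_congr rfl fun i _ => by rw [hcs, sq]
  have ht2 : t ^ 2 = ∑ i, ct i ^ 2 := by
    rw [htdef, ← real_inner_self_eq_norm_sq, parseval]
    exact Finset.sum_congr rfl fun i _ => by rw [hct, sq]
  have hW2 : ‖y‖ ^ 2 = ∑ i, a i ^ 2 := by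
    rw [← real_inner_self_eq_norm_sq, parseval]
    exact Finset.sum_congr rfl fun i _ => by rw [sq]
  have he2 : ‖xt - xstar‖ ^ 2 = ∑ i, (ct i - cs i) ^ 2 := by
    rw [← real_inner_self_eq_norm_sq, parseval]
    refine Finset.sum_congr rfl fun i _ => ?_
    rw [inner_sub_right, hcs, hct, sq]
  -- abbreviations
  set D := |μt - μstar| with hDdef
  set m0 := max (μt - μstar) 0 with hm0def
  set K := lmin + m0 with hKdef
  have hm0a : μt - μstar ≤ m0 := le_max_left _ _
  have hm0b : (0:ℝ) ≤ m0 := le_max_right _ _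
  have hm0c : m0 ≤ μt := by
    rcases max_cases (μt - μstar) 0 with ⟨h, _⟩ | ⟨h, _⟩ <;> rw [hm0def, h] <;> linarith
  have hKpos : 0 < K := by rw [hKdef]; linarith
  have hD0 : 0 ≤ D := abs_nonneg _
  have hD2 : D ^ 2 = (μstar - μt) ^ 2 := by rw [hDdef, sq_abs]; ring
  -- epsilon bound: e2 * K^2 ≤ D^2 * ‖y‖^2
  have f2 : ‖xt - xstar‖ ^ 2 * K ^ 2 ≤ D ^ 2 * ‖y‖ ^ 2 := by
    rw [he2, hW2, Finset.sum_mul, Finset.mul_sum]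
    refine Finset.sum_le_sum fun i _ => ?_
    have hli := hlampos i
    have hlmi := hlmin_le i
    have hp1 : (0:ℝ) < lam i + μt := by linarith
    have hp2 : (0:ℝ) < lam i + μstar := by linarith
    set p := (lam i + μt) * (lam i + μstar) with hpdef
    have hp : 0 < p := mul_pos hp1 hp2
    have hd : (ct i - cs i) * p = lam i * (μstar - μt) * a i := by
      rw [hctdef, hcsdef, hpdef]
      field_simp
      ring
    have hlK : lam i * K ≤ p := by
      rw [hKdef, hpdef]
      nlinarith [mul_nonneg hm0b hμstar]
    have hsq : ((ct i - cs i) * K) ^ 2 * p ^ 2 ≤ (D ^ 2 * a i ^ 2) * p ^ 2 := by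
      calc ((ct i - cs i) * K) ^ 2 * p ^ 2 = ((ct i - cs i) * p) ^ 2 * K ^ 2 := by ring
        _ = (lam i * (μstar - μt) * a i) ^ 2 * K ^ 2 := by rw [hd]
        _ = (μstar - μt) ^ 2 * a i ^ 2 * (lam i * K) ^ 2 := by ring
        _ ≤ (μstar - μt) ^ 2 * a i ^ 2 * p ^ 2 := by
            apply mul_le_mul_of_nonneg_left _ (by positivity)
            exact pow_le_pow_left₀ (by positivity) hlK 2
        _ = (D ^ 2 * a i ^ 2) * p ^ 2 := by rw [hD2]
    have := (mul_le_mul_iff_of_pos_right (by positivity : (0:ℝ) < p ^ 2)).mp hsq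
    calc (ct i - cs i) ^ 2 * K ^ 2 = ((ct i - cs i) * K) ^ 2 := by ring
      _ ≤ D ^ 2 * a i ^ 2 := this
  -- t lower bound: lmin * R ≤ K * t
  have f3 : lmin * R ≤ K * t := by
    have hsq : (lmin * R) ^ 2 ≤ (K * t) ^ 2 := by
      have : lmin ^ 2 * R ^ 2 ≤ K ^ 2 * t ^ 2 := by
        rw [hR2, ht2, Finset.mul_sum, Finset.mul_sum]
        refine Finset.sum_le_sum fun i _ => ?_
        have hli := hlampos i
        have hlmi := hlmin_le i
        have hp1 : (0:ℝ) < lam i + μt := by linarith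
        have hp2 : (0:ℝ) < lam i + μstar := by linarith
        have hkey : lmin * (lam i + μt) ≤ K * (lam i + μstar) := by
          rw [hKdef]
          nlinarith [mul_le_mul_of_nonneg_right hlmi hm0b, mul_nonneg hm0b hμstar]
        have h1 : lmin * (lam i / (lam i + μstar)) ≤ K * (lam i / (lam i + μt)) := by
          rw [← mul_div_assoc, ← mul_div_assoc, div_le_div_iff₀ hp2 hp1]
          nlinarith [mul_le_mul_of_nonneg_left hkey hli.le]
        have h2 : (0:ℝ) ≤ lmin * (lam i / (lam i + μstar)) := by positivity
        calc lmin ^ 2 * cs i ^ 2 = (lmin * (lam i / (lam i + μstar))) ^ 2 * a i ^ 2 := by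
              rw [hcsdef]; ring
          _ ≤ (K * (lam i / (lam i + μt))) ^ 2 * a i ^ 2 := by
              apply mul_le_mul_of_nonneg_right _ (sq_nonneg _)
              exact pow_le_pow_left₀ h2 h1 2
          _ = K ^ 2 * ct i ^ 2 := by rw [hctdef]; ring
      calc (lmin * R) ^ 2 = lmin ^ 2 * R ^ 2 := by ring
        _ ≤ K ^ 2 * t ^ 2 := this
        _ = (K * t) ^ 2 := by ring
    nlinarith [mul_pos hL hR, mul_nonneg hKpos.le (norm_nonneg xt)]
  have ht0 : 0 < t := by
    rcases (norm_nonneg xt).lt_or_eq with h | h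
    · exact h
    · exfalso; rw [htdef] at f3; rw [← h] at f3; nlinarith [mul_pos hL hR]
  -- norm of x
  have hxnorm : ‖x‖ = R := by
    rw [hx, norm_smul, Real.norm_eq_abs, abs_of_pos (div_pos hR ht0), ← htdef,
      div_mul_cancel₀ _ ht0.ne']
  refine ⟨le_of_eq hxnorm, ?_⟩
  -- the identity: t * ‖x - xstar‖^2 = R * (e2 - (t - R)^2)
  set S := ⟪xt, xstar⟫ with hSdef
  have hn2 : ‖x - xstar‖ ^ 2 = R ^ 2 - 2 * (R / t * S) + R ^ 2 := by
    rw [norm_sub_sq_real, hxnorm, hxstarR, hx, real_inner_smul_left, htdef]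
  have he2' : ‖xt - xstar‖ ^ 2 = t ^ 2 - 2 * S + R ^ 2 := by
    rw [norm_sub_sq_real, ← htdef, hxstarR, hSdef]
  have f1 : t * ‖x - xstar‖ ^ 2 = R * (‖xt - xstar‖ ^ 2 - (t - R) ^ 2) := by
    rw [hn2, he2']
    field_simp
    ring
  -- final bound
  have hclose' : D * ‖y‖ < lmin * ζ := by
    have := hclose
    rw [div_mul_eq_mul_div, lt_div_iff₀ hW] at this
    rw [hDdef]
    linarith
  have hgoal2 : ‖x - xstar‖ ^ 2 * lmin ^ 2 ≤ D ^ 2 * ‖y‖ ^ 2 := by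
    have he2nn : (0:ℝ) ≤ ‖xt - xstar‖ ^ 2 := sq_nonneg _
    have c1 : ‖x - xstar‖ ^ 2 * lmin ^ 2 * t ≤ lmin ^ 2 * R * ‖xt - xstar‖ ^ 2 := by
      nlinarith [f1, sq_nonneg (t - R), sq_nonneg lmin, mul_nonneg (sq_nonneg lmin) hR.le]
    have c2 : lmin ^ 2 * R * ‖xt - xstar‖ ^ 2 ≤ t * (D ^ 2 * ‖y‖ ^ 2) := by
      have h1 : lmin * R * ‖xt - xstar‖ ^ 2 ≤ K * t * ‖xt - xstar‖ ^ 2 :=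
        mul_le_mul_of_nonneg_right f3 he2nn
      have h2 : lmin * (lmin * R * ‖xt - xstar‖ ^ 2) ≤ K * (K * t * ‖xt - xstar‖ ^ 2) := by
        apply mul_le_mul (by rw [hKdef]; linarith) h1 (by positivity) hKpos.le
      have h3 : K * (K * t * ‖xt - xstar‖ ^ 2) = t * (‖xt - xstar‖ ^ 2 * K ^ 2) := by ring
      have h4 : t * (‖xt - xstar‖ ^ 2 * K ^ 2) ≤ t * (D ^ 2 * ‖y‖ ^ 2) :=
        mul_le_mul_of_nonneg_left f2 ht0.le
      calc lmin ^ 2 * R * ‖xt - xstar‖ ^ 2 = lmin * (lmin * R * ‖xt - xstar‖ ^ 2) := by ring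
        _ ≤ K * (K * t * ‖xt - xstar‖ ^ 2) := h2
        _ = t * (‖xt - xstar‖ ^ 2 * K ^ 2) := h3
        _ ≤ t * (D ^ 2 * ‖y‖ ^ 2) := h4
    nlinarith [c1, c2, ht0]
  -- conclude
  have hb : ‖x - xstar‖ ≤ D * ‖y‖ / lmin := by
    rw [le_div_iff₀ hL]
    nlinarith [norm_nonneg (x - xstar), mul_nonneg hD0 hW.le, hgoal2]
  have : D * ‖y‖ / lmin < ζ := by rw [div_lt_iff₀ hL]; linarith
  linarith
end

section
/- Let A ∈ ℝ^{d×d} be a positive-definite symmetric matrix whose eigenvalues all lie in [λ̲, λ̄] with 0 < λ̲ ≤ λ̄, let R > 0, let u ∈ ℝ^d with ‖u‖ > R, and let ζ > 0. Define ρ(μ) = ‖(A + μI)⁻¹Au‖² − R², a_1 = (‖u‖/R − 1)·λ̲, b_1 = (‖u‖/R − 1)·λ̄, and recursively for i ≥ 1: (a_{i+1}, b_{i+1}) = ((a_i + b_i)/2, b_i) if ρ((a_i + b_i)/2) ≥ 0, and (a_{i+1}, b_{i+1}) = (a_i, (a_i + b_i)/2) otherwise. Let n ∈ ℕ satisfy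 (‖u‖/R − 1)·(λ̄ − λ̲)/2ⁿ ≤ (λ̲/‖u‖)·ζ, set ṽ = (A + ((a_{n+1} + b_{n+1})/2)·I)⁻¹Au and v = (R/‖ṽ‖)·ṽ. Then ‖v‖ ≤ R and ‖v − v*‖ ≤ ζ, where v* is the Mahalanobis projection of u onto the ball B(R) = {x : ‖x‖ ≤ R} with respect to A, i.e. the unique minimizer of x ↦ (x − u)ᵀA(x − u) over B(R). -/
open scoped RealInnerProductSpace

namespace FastProjAux
variable {d : ℕ} {A : Matrix (Fin d) (Fin d) ℝ}

noncomputable def S (hA : A.PosDef) (f : Fin d → ℝ) : EuclideanSpace ℝ (Fin d) :=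
  ∑ i, f i • hA.1.eigenvectorBasis i

lemma inner_S (hA : A.PosDef) (f g : Fin d → ℝ) : ⟪S hA f, S hA g⟫ = ∑ i, f i * g i := by
  simpa [S] using hA.1.eigenvectorBasis.orthonormal.inner_sum f g Finset.univ

lemma norm_S_sq (hA : A.PosDef) (f : Fin d → ℝ) : ‖S hA f‖ ^ 2 = ∑ i, f i ^ 2 := by
  rw [← real_inner_self_eq_norm_sq, inner_S]
  exact Finset.sum_congr rfl fun i _ => (sq (f i)).symm

lemma S_repr (hA : A.PosDef) (x : EuclideanSpace ℝ (Fin d)) :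
    S hA (fun i => hA.1.eigenvectorBasis.repr x i) = x :=
  hA.1.eigenvectorBasis.sum_repr x

lemma S_add (hA : A.PosDef) (f g : Fin d → ℝ) :
    S hA f + S hA g = S hA (fun i => f i + g i) := by
  simp [S, Finset.sum_add_distrib, add_smul]

lemma S_smul (hA : A.PosDef) (r : ℝ) (f : Fin d → ℝ) :
    r • S hA f = S hA (fun i => r * f i) := by
  simp [S, Finset.smul_sum, smul_smul]

lemma S_sub (hA : A.PosDef) (f g : Fin d → ℝ) :
    S hA f - S hA g = S hA (fun i => f i - g i) := by
  simp [S, ← Finset.sum_sub_distrib, sub_smul]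

lemma mApp_basis (hA : A.PosDef) (j : Fin d) :
    mApp A (hA.1.eigenvectorBasis j) = hA.1.eigenvalues j • hA.1.eigenvectorBasis j := by
  ext i
  simpa [mApp, Matrix.toEuclideanLin_apply] using congrFun (hA.1.mulVec_eigenvectorBasis j) i

lemma mApp_S (hA : A.PosDef) (f : Fin d → ℝ) :
    mApp A (S hA f) = S hA (fun i => hA.1.eigenvalues i * f i) := by
  simp only [S, mApp, map_sum, map_smul]
  refine Finset.sum_congr rfl fun i _ => ?_
  rw [show (Matrix.toEuclideanLin A) (hA.1.eigenvectorBasis i)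
      = mApp A (hA.1.eigenvectorBasis i) from rfl, mApp_basis hA i, smul_smul, mul_comm]

lemma mApp_addSmul (μ : ℝ) (x : EuclideanSpace ℝ (Fin d)) :
    mApp (A + μ • (1 : Matrix (Fin d) (Fin d) ℝ)) x = mApp A x + μ • x := by
  simp only [mApp, map_add, map_smul, LinearMap.add_apply, LinearMap.smul_apply]
  congr 1
  ext i
  simp [Matrix.toEuclideanLin_apply]

lemma mApp_mApp (M N : Matrix (Fin d) (Fin d) ℝ) (x : EuclideanSpace ℝ (Fin d)) :
    mApp M (mApp N x) = mApp (M * N) x := by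
  ext i
  simp [mApp, Matrix.toEuclideanLin_apply, ← Matrix.mulVec_mulVec]

lemma mApp_one (x : EuclideanSpace ℝ (Fin d)) : mApp (1 : Matrix (Fin d) (Fin d) ℝ) x = x := by
  ext i
  simp [mApp, Matrix.toEuclideanLin_apply]

lemma posDef_add_smul (hA : A.PosDef) {μ : ℝ} (hμ : 0 ≤ μ) :
    (A + μ • (1 : Matrix (Fin d) (Fin d) ℝ)).PosDef := by
  refine hA.add_posSemidef ?_
  rw [← Matrix.diagonal_one, ← Matrix.diagonal_smul]
  exact Matrix.PosSemidef.diagonal (fun i => by simpa using hμ)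

lemma mApp_inv_S (hA : A.PosDef) (hL : ∀ i, 0 < hA.1.eigenvalues i) {μ : ℝ} (hμ : 0 < μ)
    (c : Fin d → ℝ) :
    mApp (A + μ • (1 : Matrix (Fin d) (Fin d) ℝ))⁻¹ (mApp A (S hA c)) =
      S hA (fun i => hA.1.eigenvalues i / (hA.1.eigenvalues i + μ) * c i) := by
  have hB : (A + μ • (1 : Matrix (Fin d) (Fin d) ℝ)).PosDef := posDef_add_smul hA hμ.le
  have hne : ∀ i, hA.1.eigenvalues i + μ ≠ 0 := fun i => (add_pos (hL i) hμ).ne'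
  have h1 : mApp (A + μ • (1 : Matrix (Fin d) (Fin d) ℝ))
      (S hA (fun i => hA.1.eigenvalues i / (hA.1.eigenvalues i + μ) * c i)) = mApp A (S hA c) := by
    rw [mApp_addSmul, mApp_S, mApp_S, S_smul, S_add]
    refine congrArg (S hA) (funext fun i => ?_)
    field_simp [hne i]
  rw [← h1, mApp_mApp, Matrix.nonsing_inv_mul _ (isUnit_iff_ne_zero.mpr hB.det_pos.ne'), mApp_one]

lemma quad_S (hA : A.PosDef) (f : Fin d → ℝ) :
    quadForm A (S hA f) = ∑ i, hA.1.eigenvalues i * f i ^ 2 := by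
  rw [quadForm, mApp_S, inner_S]
  exact Finset.sum_congr rfl fun i _ => by ring

lemma quad_lower (hA : A.PosDef) (lb : ℝ) (hlb : ∀ i, lb ≤ hA.1.eigenvalues i) (hlb0 : 0 ≤ lb)
    (x : EuclideanSpace ℝ (Fin d)) : lb * ‖x‖ ^ 2 ≤ quadForm A x := by
  have hx := S_repr hA x
  set f : Fin d → ℝ := fun i => hA.1.eigenvectorBasis.repr x i with hf
  rw [← hx, quad_S, norm_S_sq, Finset.mul_sum]
  exact Finset.sum_le_sum fun i _ => by nlinarith [sq_nonneg (f i), hlb i]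

lemma inner_mApp_comm (hA : A.PosDef) (x y : EuclideanSpace ℝ (Fin d)) :
    ⟪x, mApp A y⟫ = ⟪y, mApp A x⟫ := by
  have hsym := (Matrix.isHermitian_iff_isSymmetric.mp hA.1)
  rw [show mApp A y = Matrix.toEuclideanLin A y from rfl, ← hsym x y]
  exact real_inner_comm _ _

lemma quad_add (hA : A.PosDef) (x y : EuclideanSpace ℝ (Fin d)) :
    quadForm A (x + y) = quadForm A x + quadForm A y + 2 * ⟪y, mApp A x⟫ := by
  simp only [quadForm, mApp, map_add]
  rw [inner_add_left, inner_add_right, inner_add_right]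
  have := inner_mApp_comm hA x y
  simp only [mApp] at this
  rw [this]
  ring

lemma quad_sub (hA : A.PosDef) (x y : EuclideanSpace ℝ (Fin d)) :
    quadForm A (x - y) = quadForm A x + quadForm A y - 2 * ⟪y, mApp A x⟫ := by
  simp only [quadForm, mApp, map_sub]
  rw [inner_sub_left, inner_sub_right, inner_sub_right]
  have := inner_mApp_comm hA x y
  simp only [mApp] at this
  rw [this]
  ring

lemma quad_smul (hA : A.PosDef) (r : ℝ) (x : EuclideanSpace ℝ (Fin d)) :
    quadForm A (r • x) = r ^ 2 * quadForm A x := by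
  simp only [quadForm, mApp, map_smul]
  rw [real_inner_smul_left, real_inner_smul_right]
  ring

end FastProjAux

set_option maxHeartbeats 2000000

open FastProjAux

/-- correctness of FastProj: after `n` bisection steps with
`(‖u‖/R − 1)·(λ̄ − λ̲)/2ⁿ ≤ (λ̲/‖u‖)·ζ`, the renormalized output
`v = (R/‖ṽ‖)·ṽ`, `ṽ = (A + ((a_{n+1}+b_{n+1})/2)I)⁻¹Au`, satisfies `‖v‖ ≤ R` and
`‖v − v*‖ ≤ ζ`, where `v*` is the Mahalanobis projection of `u` onto `B(R)` w.r.t. `A`. -/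
theorem stmt_16 {d : ℕ} (A : Matrix (Fin d) (Fin d) ℝ) (hA : A.PosDef)
    (lb ub : ℝ) (hlb : 0 < lb) (hlbub : lb ≤ ub)
    (heig : ∀ i : Fin d, lb ≤ hA.1.eigenvalues i ∧ hA.1.eigenvalues i ≤ ub)
    (R ζ : ℝ) (hR : 0 < R) (hζ : 0 < ζ)
    (u : EuclideanSpace ℝ (Fin d)) (hu : R < ‖u‖)
    (ρ : ℝ → ℝ)
    (hρ : ∀ μ : ℝ, ρ μ =
      ‖mApp (A + μ • (1 : Matrix (Fin d) (Fin d) ℝ))⁻¹ (mApp A u)‖^2 - R^2)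
    (a b : ℕ → ℝ)
    (ha1 : a 1 = (‖u‖ / R - 1) * lb) (hb1 : b 1 = (‖u‖ / R - 1) * ub)
    (hbis₁ : ∀ i ≥ 1, 0 ≤ ρ ((a i + b i) / 2) →
      a (i+1) = (a i + b i) / 2 ∧ b (i+1) = b i)
    (hbis₂ : ∀ i ≥ 1, ρ ((a i + b i) / 2) < 0 →
      a (i+1) = a i ∧ b (i+1) = (a i + b i) / 2)
    (n : ℕ) (hn : (‖u‖ / R - 1) * (ub - lb) / 2^n ≤ (lb / ‖u‖) * ζ)
    (vtil : EuclideanSpace ℝ (Fin d))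
    (hvtil : vtil = mApp (A + ((a (n+1) + b (n+1)) / 2) • (1 : Matrix (Fin d) (Fin d) ℝ))⁻¹
      (mApp A u))
    (v : EuclideanSpace ℝ (Fin d)) (hv : v = (R / ‖vtil‖) • vtil) :
    ‖v‖ ≤ R ∧ ∀ vstar : EuclideanSpace ℝ (Fin d),
      IsMProj A (Metric.closedBall (0 : EuclideanSpace ℝ (Fin d)) R) u vstar →
      ‖v - vstar‖ ≤ ζ := by
  have hL : ∀ i, 0 < hA.1.eigenvalues i := fun i => lt_of_lt_of_le hlb (heig i).1
  set L : Fin d → ℝ := hA.1.eigenvalues with hLdef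
  set c : Fin d → ℝ := fun i => hA.1.eigenvectorBasis.repr u i with hcdef
  have hu0 : 0 < ‖u‖ := hR.trans hu
  have huS : S hA c = u := S_repr hA u
  have hcsum : ∑ i, c i ^ 2 = ‖u‖ ^ 2 := by rw [← norm_S_sq hA c, huS]
  set g : ℝ → ℝ := fun μ => ∑ i, (L i / (L i + μ) * c i) ^ 2 with hgdef
  have hρg : ∀ μ : ℝ, 0 < μ → ρ μ = g μ - R ^ 2 := by
    intro μ hμ
    rw [hρ μ, ← huS, mApp_inv_S hA hL hμ c, norm_S_sq]
  set t : ℝ := ‖u‖ / R - 1 with htdef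
  have ht : 0 < t := by
    have h1 : 1 < ‖u‖ / R := (one_lt_div hR).mpr hu
    rw [htdef]; linarith
  have ha1pos : 0 < a 1 := by rw [ha1]; exact mul_pos ht hlb
  have hb1pos : 0 < b 1 := by rw [hb1]; exact mul_pos ht (hlb.trans_le hlbub)
  have ha1b1 : a 1 ≤ b 1 := by
    rw [ha1, hb1]; exact mul_le_mul_of_nonneg_left hlbub ht.le
  -- ratio monotonicity helper
  have hratio : ∀ x y μ : ℝ, 0 < x → x ≤ y → 0 < μ → x / (x + μ) ≤ y / (y + μ) := by
    intro x y μ hx hxy hμ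
    rw [div_le_div_iff₀ (by linarith) (by linarith)]
    nlinarith
  have hρa1 : 0 ≤ ρ (a 1) := by
    rw [hρg _ ha1pos]
    have hkey : R ^ 2 ≤ g (a 1) := by
      have h1 : R ^ 2 = ∑ i, (R / ‖u‖ * c i) ^ 2 := by
        have : ∀ i, (R / ‖u‖ * c i) ^ 2 = (R / ‖u‖) ^ 2 * c i ^ 2 := fun i => by ring
        simp_rw [this]
        rw [← Finset.mul_sum, hcsum]
        field_simp
      rw [h1]
      refine Finset.sum_le_sum fun i _ => ?_
      have hd : 0 < lb + a 1 := by linarith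
      have hbase : R / ‖u‖ = lb / (lb + a 1) := by
        rw [div_eq_div_iff hu0.ne' hd.ne', ha1, htdef]
        field_simp
        ring
      have h2 : R / ‖u‖ ≤ L i / (L i + a 1) := by
        rw [hbase]
        exact hratio lb (L i) (a 1) hlb (heig i).1 ha1pos
      have h3 : 0 ≤ R / ‖u‖ := by positivity
      calc (R / ‖u‖ * c i) ^ 2 = (R / ‖u‖) ^ 2 * c i ^ 2 := by ring
      _ ≤ (L i / (L i + a 1)) ^ 2 * c i ^ 2 :=
        mul_le_mul_of_nonneg_right (pow_le_pow_left₀ h3 h2 2) (sq_nonneg _)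
      _ = (L i / (L i + a 1) * c i) ^ 2 := by ring
    linarith
  have hρb1 : ρ (b 1) ≤ 0 := by
    rw [hρg _ hb1pos]
    have hkey : g (b 1) ≤ R ^ 2 := by
      have h1 : R ^ 2 = ∑ i, (R / ‖u‖ * c i) ^ 2 := by
        have : ∀ i, (R / ‖u‖ * c i) ^ 2 = (R / ‖u‖) ^ 2 * c i ^ 2 := fun i => by ring
        simp_rw [this]
        rw [← Finset.mul_sum, hcsum]
        field_simp
      rw [h1]
      refine Finset.sum_le_sum fun i _ => ?_
      have hub : 0 < ub := hlb.trans_le hlbub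
      have hd : 0 < ub + b 1 := by linarith
      have hbase : R / ‖u‖ = ub / (ub + b 1) := by
        rw [div_eq_div_iff hu0.ne' hd.ne', hb1, htdef]
        field_simp
        ring
      have h2 : L i / (L i + b 1) ≤ R / ‖u‖ := by
        rw [hbase]
        exact hratio (L i) ub (b 1) (hL i) (heig i).2 hb1pos
      have h4 : 0 ≤ L i / (L i + b 1) := (div_pos (hL i) (add_pos (hL i) hb1pos)).le
      calc (L i / (L i + b 1) * c i) ^ 2 = (L i / (L i + b 1)) ^ 2 * c i ^ 2 := by ring
      _ ≤ (R / ‖u‖) ^ 2 * c i ^ 2 :=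
        mul_le_mul_of_nonneg_right (pow_le_pow_left₀ h4 h2 2) (sq_nonneg _)
      _ = (R / ‖u‖ * c i) ^ 2 := by ring
    linarith
  -- bisection invariant
  have inv : ∀ i, 1 ≤ i → a 1 ≤ a i ∧ a i ≤ b i ∧ b i ≤ b 1 ∧ 0 ≤ ρ (a i) ∧ ρ (b i) ≤ 0 ∧
      b i - a i = (b 1 - a 1) / 2 ^ (i - 1) := by
    intro i hi
    induction i with
    | zero => omega
    | succ k ih =>
      rcases eq_or_lt_of_le hi with h1 | h1
      · obtain rfl : k = 0 := by omega
        exact ⟨le_refl _, ha1b1, le_refl _, hρa1, hρb1, by simp⟩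
      · have hk : 1 ≤ k := by omega
        obtain ⟨h1, h2, h3, h4, h5, h6⟩ := ih hk
        have hidx : k + 1 - 1 = (k - 1) + 1 := by omega
        rcases le_or_gt 0 (ρ ((a k + b k) / 2)) with hs | hs
        · obtain ⟨hak, hbk⟩ := hbis₁ k hk hs
          rw [hak, hbk]
          refine ⟨by linarith, by linarith, h3, hs, h5, ?_⟩
          have hw : b k - (a k + b k) / 2 = (b k - a k) / 2 := by ring
          rw [hw, h6, hidx, pow_succ, div_div]
        · obtain ⟨hak, hbk⟩ := hbis₂ k hk hs
          rw [hak, hbk]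
          refine ⟨h1, by linarith, by linarith, h4, hs.le, ?_⟩
          have hw : (a k + b k) / 2 - a k = (b k - a k) / 2 := by ring
          rw [hw, h6, hidx, pow_succ, div_div]
  obtain ⟨hs1, hstt, htt1, hρs, hρtt, hwidth⟩ := inv (n + 1) (by omega)
  set s : ℝ := a (n + 1) with hsdef
  set tt : ℝ := b (n + 1) with httdef
  have hspos : 0 < s := lt_of_lt_of_le ha1pos hs1
  have hwidth' : tt - s = (b 1 - a 1) / 2 ^ n := by
    simpa using hwidth
  -- continuity and IVT
  have hcont : ContinuousOn ρ (Set.Icc s tt) := by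
    have hg : ContinuousOn (fun μ => g μ - R ^ 2) (Set.Icc s tt) := by
      refine ContinuousOn.sub ?_ continuousOn_const
      refine continuousOn_finset_sum _ fun i _ => ?_
      refine ContinuousOn.pow ?_ 2
      refine ContinuousOn.mul ?_ continuousOn_const
      refine ContinuousOn.div continuousOn_const ?_ ?_
      · exact (continuous_const.add continuous_id).continuousOn
      · exact fun μ hμ => (add_pos (hL i) (lt_of_lt_of_le hspos hμ.1)).ne'
    exact hg.congr fun μ hμ => hρg μ (lt_of_lt_of_le hspos hμ.1)
  obtain ⟨μs, hμsmem, hμs0⟩ := intermediate_value_Icc' hstt hcont ⟨hρtt, hρs⟩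
  have hμspos : 0 < μs := lt_of_lt_of_le hspos hμsmem.1
  have hgμs : g μs = R ^ 2 := by
    have := hρg μs hμspos
    rw [hμs0] at this
    linarith
  -- the exact projection point
  set fs : Fin d → ℝ := fun i => L i / (L i + μs) * c i with hfsdef
  set p : EuclideanSpace ℝ (Fin d) := S hA fs with hpdef
  have hpnorm2 : ‖p‖ ^ 2 = R ^ 2 := by rw [hpdef, norm_S_sq]; exact hgμs
  have hpR : ‖p‖ = R := by
    have h := congrArg Real.sqrt hpnorm2
    rwa [Real.sqrt_sq (norm_nonneg p), Real.sqrt_sq hR.le] at h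
  have hpmem : p ∈ Metric.closedBall (0 : EuclideanSpace ℝ (Fin d)) R := by
    rw [Metric.mem_closedBall, dist_zero_right, hpR]
  have hAp : mApp A (p - u) = (-μs) • p := by
    rw [hpdef, ← huS, S_sub hA fs c, mApp_S, S_smul]
    refine congrArg (S hA) (funext fun i => ?_)
    have hne : L i + μs ≠ 0 := (add_pos (hL i) hμspos).ne'
    have key : L i / (L i + μs) * (L i + μs) = L i := div_mul_cancel₀ _ hne
    simp only [hfsdef]
    linear_combination (c i) * key
  clear_value p
  have quadnn : ∀ x : EuclideanSpace ℝ (Fin d), 0 ≤ quadForm A x := fun x =>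
    le_trans (by positivity) (quad_lower hA lb (fun i => (heig i).1) hlb.le x)
  have hopt : ∀ z ∈ Metric.closedBall (0 : EuclideanSpace ℝ (Fin d)) R,
      quadForm A (p - u) ≤ quadForm A (z - u) := by
    intro z hz
    have hz' : ‖z‖ ≤ R := by rwa [Metric.mem_closedBall, dist_zero_right] at hz
    have hdecomp : z - u = (p - u) + (z - p) := by abel
    rw [hdecomp, quad_add hA (p - u) (z - p)]
    have hip : 0 ≤ ⟪z - p, mApp A (p - u)⟫ := by
      rw [hAp, real_inner_smul_right]
      have h1 : ⟪z - p, p⟫ = ⟪z, p⟫ - ‖p‖ ^ 2 := by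
        rw [inner_sub_left, real_inner_self_eq_norm_sq]
      have h2 : ⟪z, p⟫ ≤ ‖z‖ * ‖p‖ := real_inner_le_norm z p
      have h3 : ⟪z - p, p⟫ ≤ 0 := by
        have h4 : ⟪z, p⟫ ≤ R * R := by
          refine le_trans h2 ?_
          rw [hpR]
          exact mul_le_mul_of_nonneg_right hz' hR.le
        have h5 : ‖p‖ ^ 2 = R * R := by rw [hpnorm2]; ring
        rw [h1, h5]
        linarith
      rw [neg_mul]
      exact neg_nonneg.mpr (mul_nonpos_iff.mpr (Or.inl ⟨hμspos.le, h3⟩))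
    linarith [quadnn (z - p), hip]
  have hmnorm_mono : ∀ x y : EuclideanSpace ℝ (Fin d),
      quadForm A x ≤ quadForm A y → mnorm A x ≤ mnorm A y := fun x y h =>
    Real.sqrt_le_sqrt h
  have hpproj : IsMProj A (Metric.closedBall (0 : EuclideanSpace ℝ (Fin d)) R) u p :=
    ⟨hpmem, fun z hz => hmnorm_mono _ _ (hopt z hz)⟩
  -- uniqueness : any projection equals p
  have huniq : ∀ vstar : EuclideanSpace ℝ (Fin d),
      IsMProj A (Metric.closedBall (0 : EuclideanSpace ℝ (Fin d)) R) u vstar → vstar = p := by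
    intro q hq
    obtain ⟨hqmem, hqmin⟩ := hq
    have h1 : quadForm A (p - u) ≤ quadForm A (q - u) := hopt q hqmem
    have h2 : quadForm A (q - u) ≤ quadForm A (p - u) := by
      have hm := hqmin p hpmem
      simp only [mnorm] at hm
      exact (Real.sqrt_le_sqrt_iff (quadnn _)).mp hm
    have heq : quadForm A (q - u) = quadForm A (p - u) := le_antisymm h2 h1
    have hqnorm : ‖q‖ ≤ R := by rwa [Metric.mem_closedBall, dist_zero_right] at hqmem
    set w : EuclideanSpace ℝ (Fin d) := (1/2 : ℝ) • (p + q) with hwdef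
    have hwmem : w ∈ Metric.closedBall (0 : EuclideanSpace ℝ (Fin d)) R := by
      rw [Metric.mem_closedBall, dist_zero_right, hwdef, norm_smul]
      have h3 := norm_add_le p q
      have h4 : |(1/2 : ℝ)| = 1/2 := by norm_num
      rw [Real.norm_eq_abs, h4]
      nlinarith [norm_nonneg (p + q)]
    have hw : quadForm A (p - u) ≤ quadForm A (w - u) := hopt w hwmem
    have e1 : w - u = (1/2 : ℝ) • ((p - u) + (q - u)) := by rw [hwdef]; module
    have e2 : (1/2 : ℝ) • (p - q) = (1/2 : ℝ) • ((p - u) - (q - u)) := by module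
    have hkey : quadForm A (w - u) + quadForm A ((1/2 : ℝ) • (p - q)) =
        (quadForm A (p - u) + quadForm A (q - u)) / 2 := by
      have hx := quad_add hA (p - u) (q - u)
      have hy := quad_sub hA (p - u) (q - u)
      rw [e1, e2, quad_smul hA, quad_smul hA, hx, hy]
      ring
    have h3 : quadForm A ((1/2 : ℝ) • (p - q)) ≤ 0 := by linarith
    have h4 : lb * ‖(1/2 : ℝ) • (p - q)‖ ^ 2 ≤ 0 :=
      le_trans (quad_lower hA lb (fun i => (heig i).1) hlb.le _) h3
    have h5 : ‖(1/2 : ℝ) • (p - q)‖ ^ 2 = 0 :=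
      le_antisymm (by nlinarith [sq_nonneg ‖(1/2 : ℝ) • (p - q)‖]) (sq_nonneg _)
    have h6 : (1/2 : ℝ) • (p - q) = 0 := by
      rw [← norm_eq_zero]
      exact pow_eq_zero_iff two_ne_zero |>.mp h5
    have h7 : p - q = 0 := by
      rcases smul_eq_zero.mp h6 with h | h
      · norm_num at h
      · exact h
    have := sub_eq_zero.mp h7
    exact this.symm
  -- quantitative bounds
  set μn : ℝ := (s + tt) / 2 with hμndef
  have hμnpos : 0 < μn := by rw [hμndef]; linarith
  set fn : Fin d → ℝ := fun i => L i / (L i + μn) * c i with hfndef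
  have hvtilS : vtil = S hA fn := by
    rw [hvtil, ← huS, mApp_inv_S hA hL hμnpos c]
  set δ : ℝ := |μs - μn| with hδdef
  have hδ : δ ≤ (b 1 - a 1) / 2 ^ n / 2 := by
    rw [hδdef]
    have h1 := hμsmem.1
    have h2 := hμsmem.2
    rw [abs_le]
    constructor <;> rw [hμndef] <;> [linarith [hwidth']; linarith [hwidth']]
  have hb1a1 : b 1 - a 1 = t * (ub - lb) := by rw [ha1, hb1]; ring
  have hδζ : δ ≤ lb / ‖u‖ * ζ / 2 := by
    have h1 : (b 1 - a 1) / 2 ^ n ≤ lb / ‖u‖ * ζ := by rw [hb1a1]; exact hn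
    linarith
  have hδnn : 0 ≤ δ := abs_nonneg _
  have hcomp : ∀ i, (fn i - fs i) ^ 2 ≤ (δ / lb * c i) ^ 2 := by
    intro i
    have hne1 : L i + μn ≠ 0 := (add_pos (hL i) hμnpos).ne'
    have hne2 : L i + μs ≠ 0 := (add_pos (hL i) hμspos).ne'
    have hdiff : fn i - fs i = L i * c i * (μs - μn) / ((L i + μn) * (L i + μs)) := by
      rw [hfndef, hfsdef]
      field_simp
      ring
    have hpos : (0:ℝ) < (L i + μn) * (L i + μs) :=
      mul_pos (add_pos (hL i) hμnpos) (add_pos (hL i) hμspos)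
    have habs : |fn i - fs i| ≤ δ / lb * |c i| := by
      rw [hdiff, abs_div, abs_mul, abs_mul, abs_of_pos hpos, abs_of_pos (hL i),
        div_le_iff₀ hpos]
      have hLl : L i * lb ≤ (L i + μn) * (L i + μs) := by
        nlinarith [(heig i).1, hL i, hμnpos.le, hμspos.le]
      have hA1 : δ / lb * |c i| * (L i * lb) = L i * |c i| * δ := by
        field_simp
      have hA2 : δ / lb * |c i| * (L i * lb) ≤ δ / lb * |c i| * ((L i + μn) * (L i + μs)) := by
        have hnn : 0 ≤ δ / lb * |c i| := by positivity
        exact mul_le_mul_of_nonneg_left hLl hnn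
      rw [hδdef] at hA1 hA2 ⊢
      calc L i * |c i| * |μs - μn| = |μs - μn| / lb * |c i| * (L i * lb) := by rw [hA1]
      _ ≤ |μs - μn| / lb * |c i| * ((L i + μn) * (L i + μs)) := hA2
    calc (fn i - fs i) ^ 2 = |fn i - fs i| ^ 2 := (sq_abs _).symm
    _ ≤ (δ / lb * |c i|) ^ 2 := by
        have h0 : (0:ℝ) ≤ δ / lb * |c i| := by positivity
        nlinarith [abs_nonneg (fn i - fs i)]
    _ = (δ / lb * c i) ^ 2 := by rw [mul_pow, mul_pow, sq_abs]
  have herr2 : ‖vtil - p‖ ^ 2 ≤ (δ / lb * ‖u‖) ^ 2 := by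
    rw [hvtilS, hpdef, S_sub hA fn fs, norm_S_sq]
    calc ∑ i, (fn i - fs i) ^ 2 ≤ ∑ i, (δ / lb * c i) ^ 2 :=
      Finset.sum_le_sum fun i _ => hcomp i
    _ = (δ / lb) ^ 2 * ‖u‖ ^ 2 := by
        have : ∀ i, (δ / lb * c i) ^ 2 = (δ / lb) ^ 2 * c i ^ 2 := fun i => by ring
        simp_rw [this]
        rw [← Finset.mul_sum, hcsum]
    _ = (δ / lb * ‖u‖) ^ 2 := by ring
  have hq2 : δ / lb * ‖u‖ ≤ ζ / 2 := by
    rw [div_mul_eq_mul_div, div_le_iff₀ hlb]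
    calc δ * ‖u‖ ≤ (lb / ‖u‖ * ζ / 2) * ‖u‖ :=
      mul_le_mul_of_nonneg_right hδζ hu0.le
    _ = ζ / 2 * lb := by field_simp
  have herr : ‖vtil - p‖ ≤ ζ / 2 := by
    have h1 : ‖vtil - p‖ ^ 2 ≤ (ζ / 2) ^ 2 := by
      refine le_trans herr2 ?_
      have h0 : (0:ℝ) ≤ δ / lb * ‖u‖ := by positivity
      nlinarith
    have h2 := Real.sqrt_le_sqrt h1
    rwa [Real.sqrt_sq (norm_nonneg _), Real.sqrt_sq (by linarith : (0:ℝ) ≤ ζ / 2)] at h2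
  have hvtne : vtil ≠ 0 := by
    intro h0
    have hsum0 : ∑ i, fn i ^ 2 = 0 := by
      rw [← norm_S_sq hA fn, ← hvtilS, h0]
      simp
    have hall := (Finset.sum_eq_zero_iff_of_nonneg
      (fun i _ => sq_nonneg (fn i))).mp hsum0
    have hc0 : ∀ i, c i = 0 := by
      intro i
      have h1 : fn i ^ 2 = 0 := hall i (Finset.mem_univ i)
      have h2 : fn i = 0 := pow_eq_zero_iff two_ne_zero |>.mp h1
      rw [hfndef] at h2
      have h3 : L i / (L i + μn) ≠ 0 := by
        apply div_ne_zero (hL i).ne' (add_pos (hL i) hμnpos).ne'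
      exact (mul_eq_zero.mp h2).resolve_left h3
    have : ‖u‖ ^ 2 = 0 := by rw [← hcsum]; simp [hc0]
    nlinarith
  have hvt0 : 0 < ‖vtil‖ := norm_pos_iff.mpr hvtne
  have hvR : ‖v‖ = R := by
    rw [hv, norm_smul, Real.norm_eq_abs, abs_of_pos (div_pos hR hvt0),
      div_mul_cancel₀ _ hvt0.ne']
  refine ⟨hvR.le, ?_⟩
  intro vstar hstar
  rw [huniq vstar hstar]
  have hvvt : ‖v - vtil‖ = |R - ‖vtil‖| := by
    have e3 : v - vtil = ((R - ‖vtil‖) / ‖vtil‖) • vtil := by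
      rw [hv]
      rw [show ((R - ‖vtil‖) / ‖vtil‖) = R / ‖vtil‖ - 1 by field_simp]
      rw [sub_smul, one_smul]
    rw [e3, norm_smul, Real.norm_eq_abs, abs_div, abs_of_pos hvt0,
      div_mul_cancel₀ _ hvt0.ne']
  have h7 : ‖v - vtil‖ ≤ ζ / 2 := by
    rw [hvvt, ← hpR]
    refine le_trans (abs_norm_sub_norm_le p vtil) ?_
    rw [norm_sub_rev]
    exact herr
  calc ‖v - p‖ = ‖(v - vtil) + (vtil - p)‖ := by abel_nf
  _ ≤ ‖v - vtil‖ + ‖vtil - p‖ := norm_add_le _ _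
  _ ≤ ζ / 2 + ζ / 2 := add_le_add h7 herr
  _ = ζ := by ring
end
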